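/- arXiv:1901.10571 — 10 statements merged into one kernel-verified Lean document; each statement's English description precedes it below -/
import Mathlib

section
/- Let p be a pattern of length n with coefficients a₁,…,aₙ and partial sums bᵢ = a₁+⋯+aᵢ, and let k ∈ ℕ. If p has admissibility degree at least k+1, then bᵢ ≥ min{i,k} for all i ∈ {1,…,n}. -/
/-- A numerical semigroup: an additive submonoid of ℕ with finite complement. -/
def IsNumericalSemigroup (S : Set ℕ) : Prop :=
  0 ∈ S ∧ (∀ a ∈ S, ∀ b ∈ S, a + b ∈ S) ∧ Sᶜ.Finite

/-- Evaluation of a pattern (list of coefficients a₁,…,aₙ) at s₁,…,sₙ. -/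
def patEval (p : List ℤ) (s : ℕ → ℕ) : ℤ :=
  ∑ i ∈ Finset.range p.length, p.getD i 0 * (s i : ℤ)

/-- `S` admits the pattern `p`: p(s₁,…,sₙ) ∈ S for all s₁ ≥ ⋯ ≥ sₙ in S. -/
def AdmitsPat (S : Set ℕ) (p : List ℤ) : Prop :=
  ∀ s : ℕ → ℕ, (∀ i, s i ∈ S) → (∀ i j, i ≤ j → s j ≤ s i) →
    ∃ m ∈ S, (m : ℤ) = patEval p s

/-- A pattern is admissible if it is admitted by some numerical semigroup. -/
def Admissible (p : List ℤ) : Prop :=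
  ∃ S : Set ℕ, IsNumericalSemigroup S ∧ AdmitsPat S p

/-- The derivative p' of a pattern. -/
def pderiv : List ℤ → List ℤ
  | [] => []
  | a :: q => if a = 1 then q else (a - 1) :: q

/-- The admissibility degree: least k such that p⁽ᵏ⁾ is not admissible, or ∞. -/
noncomputable def adDeg (p : List ℤ) : ℕ∞ :=
  sInf ((fun m : ℕ => (m : ℕ∞)) '' {m : ℕ | ¬ Admissible (pderiv^[m] p)})

/-- The partial sum bᵢ = a₁ + ⋯ + aᵢ of the coefficients of `p`. -/
def psum (p : List ℤ) (i : ℕ) : ℤ :=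
  ∑ j ∈ Finset.range i, p.getD j 0

/-!
Testing an admissible pattern on the sequence `t, …, t, 0, 0, …` (`i` copies of a positive
`t ∈ S`) gives `bᵢ · t ≥ 0`, so admissibility forces `bᵢ ≥ 0`. Passing from `p` to `p'` lowers
every partial sum by one, after dropping the first coefficient when it equals `1`; so by
induction on `k`, admissibility of `p, p', …, p⁽ᵏ⁾` gives `bᵢ ≥ min{i, k}`.
-/

lemma psum_cons (a : ℤ) (q : List ℤ) (i : ℕ) :
    psum (a :: q) (i + 1) = a + psum q i := by
  rw [psum, Finset.sum_range_succ', add_comm]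
  simp [psum]

lemma IsNumericalSemigroup.exists_pos_mem {S : Set ℕ} (hS : IsNumericalSemigroup S) :
    ∃ t ∈ S, 0 < t :=
  (by simpa using hS.2.2.infinite_compl : S.Infinite).exists_gt 0

lemma patEval_step (p : List ℤ) (t : ℕ) {i : ℕ} (hi : i ≤ p.length) :
    patEval p (fun j => if j < i then t else 0) = psum p i * t := by
  rw [patEval, psum, Finset.sum_mul, ← Finset.sum_range_add_sum_Ico _ hi]
  have hhead : ∀ j ∈ Finset.range i,
      p.getD j 0 * ((if j < i then t else 0 : ℕ) : ℤ) = p.getD j 0 * t := by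
    intro j hj
    simp [Finset.mem_range.mp hj]
  have htail : ∀ j ∈ Finset.Ico i p.length,
      p.getD j 0 * ((if j < i then t else 0 : ℕ) : ℤ) = 0 := by
    intro j hj
    simp [not_lt.mpr (Finset.mem_Ico.mp hj).1]
  rw [Finset.sum_congr rfl hhead, Finset.sum_eq_zero htail, add_zero]

lemma Admissible.psum_nonneg {p : List ℤ} (h : Admissible p) {i : ℕ} (hi : i ≤ p.length) :
    0 ≤ psum p i := by
  obtain ⟨S, hS, hadm⟩ := h
  obtain ⟨t, ht, htpos⟩ := hS.exists_pos_mem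
  obtain ⟨m, -, hm⟩ := hadm (fun j => if j < i then t else 0)
    (fun j => by split_ifs <;> simp [ht, hS.1])
    (fun j j' hjj' => by split_ifs <;> omega)
  rw [patEval_step p t hi] at hm
  have htpos' : (0 : ℤ) < t := by exact_mod_cast htpos
  exact nonneg_of_mul_nonneg_left (hm ▸ Int.natCast_nonneg m) htpos'

lemma admissible_iterate_of_lt_adDeg {p : List ℤ} {m : ℕ} (h : (m : ℕ∞) < adDeg p) :
    Admissible (pderiv^[m] p) := by
  by_contra hm
  exact (sInf_le ⟨m, hm, rfl⟩ : adDeg p ≤ m).not_gt h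

lemma min_le_psum_of_admissible_iterate (k : ℕ) (p : List ℤ)
    (h : ∀ m ≤ k, Admissible (pderiv^[m] p)) {i : ℕ} (hi : i ≤ p.length) :
    (min i k : ℤ) ≤ psum p i := by
  induction k generalizing p i with
  | zero => simpa using (h 0 le_rfl).psum_nonneg hi
  | succ k ih =>
    have h' : ∀ m ≤ k, Admissible (pderiv^[m] (pderiv p)) := fun m hm =>
      h (m + 1) (by omega)
    rcases p with _ | ⟨a, q⟩
    · simp [show i = 0 by simpa using hi, psum]
    rcases i with _ | j
    · simp [psum]
    by_cases ha : a = 1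
    · rw [pderiv, if_pos ha] at h'
      have := ih q h' (by simpa using hi)
      rw [psum_cons, ha]
      push_cast at this ⊢
      omega
    · rw [pderiv, if_neg ha] at h'
      have := ih ((a - 1) :: q) h' hi
      rw [psum_cons] at this ⊢
      push_cast at this ⊢
      omega

theorem stmt_1_general (p : List ℤ) (k : ℕ)
    (hdeg : (k : ℕ∞) + 1 ≤ adDeg p) :
    ∀ i : ℕ, 1 ≤ i → i ≤ p.length → (min i k : ℤ) ≤ psum p i := by
  intro i _ hi
  refine min_le_psum_of_admissible_iterate k p (fun m hm => ?_) hi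
  refine admissible_iterate_of_lt_adDeg (lt_of_lt_of_le ?_ hdeg)
  exact_mod_cast Nat.lt_succ_of_le hm

/-- If `p` has admissibility degree at least k+1, then bᵢ ≥ min{i,k}
for all i ∈ {1,…,n}. -/
theorem stmt_1 (p : List ℤ) (hp : ∀ a ∈ p, a ≠ 0) (k : ℕ)
    (hdeg : (k : ℕ∞) + 1 ≤ adDeg p) :
    ∀ i : ℕ, 1 ≤ i → i ≤ p.length → (min i k : ℤ) ≤ psum p i :=
  stmt_1_general p k hdeg
end

section
/- Every admissible pattern p of length n with finite admissibility degree can be written uniquely as p(x₁,…,xₙ) = H_p(x₁,…,x_h) + C_p(x_h,…,x_t) + T_p(x_{t+1},…,xₙ), where either H_p = 0 or all the coefficients of H_p are positive and their sum equals ad(p)−1, C_p is an admissible pattern whose coefficients sum to zero, and T_p is a pattern with ad(T_p) > 1. -/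
/-- The i-th coefficient aᵢ of `p` (1-indexed), zero outside {1,…,n}. -/
def coeffFn (p : List ℤ) (i : ℕ) : ℤ :=
  if i = 0 then 0 else p.getD (i - 1) 0

/-- The list of values f a, f (a+1), …, f b. -/
def segList (f : ℕ → ℤ) (a b : ℕ) : List ℤ :=
  (List.range (b + 1 - a)).map fun j => f (a + j)

namespace SD

lemma psum_zero (p : List ℤ) : psum p 0 = 0 := by simp [psum]

lemma psum_succ (p : List ℤ) (i : ℕ) : psum p (i+1) = psum p i + p.getD i 0 := by
  simp [psum, Finset.sum_range_succ]

lemma psum_cons (a : ℤ) (q : List ℤ) (i : ℕ) : psum (a :: q) (i+1) = a + psum q i := by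
  unfold psum
  rw [Finset.sum_range_succ']
  simp [add_comm]

lemma psum_of_le (p : List ℤ) {i : ℕ} (h : p.length ≤ i) : psum p i = psum p p.length := by
  induction i with
  | zero => rw [Nat.le_zero.mp h]
  | succ n ih =>
    rcases Nat.lt_or_ge p.length (n+1) with h' | h'
    · rw [psum_succ, ih (by omega), List.getD_eq_default _ _ (by omega), add_zero]
    · have : p.length = n + 1 := by omega
      rw [this]

lemma psum_min (p : List ℤ) (i : ℕ) : psum p i = psum p (min i p.length) := by
  rcases le_total i p.length with h | h
  · simp [min_eq_left h]
  · rw [min_eq_right h, psum_of_le p h]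

lemma patEval_cons (a : ℤ) (q : List ℤ) (s : ℕ → ℕ) :
    patEval (a :: q) s = a * s 0 + patEval q (fun i => s (i+1)) := by
  unfold patEval
  rw [List.length_cons, Finset.sum_range_succ']
  simp [add_comm]

lemma patEval_nonneg_aux (q : List ℤ) : ∀ (c : ℤ) (s : ℕ → ℕ),
    (∀ i j : ℕ, i ≤ j → s j ≤ s i) → (∀ i, 1 ≤ i → 0 ≤ c + psum q i) →
    0 ≤ c * s 0 + patEval q s := by
  induction q with
  | nil =>
    intro c s _ hc
    have h0 : 0 ≤ c := by simpa [psum] using hc 1 le_rfl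
    have : patEval ([] : List ℤ) s = 0 := by simp [patEval]
    rw [this, add_zero]
    positivity
  | cons a q ih =>
    intro c s hs hc
    have hca : 0 ≤ c + a := by simpa [psum_cons, psum_zero] using hc 1 le_rfl
    have hih := ih (c + a) (fun i => s (i+1)) (fun i j hij => hs (i+1) (j+1) (by omega))
      (fun i hi => by simpa [add_assoc, psum_cons] using hc (i+1) (by omega))
    rw [patEval_cons]
    have hmono : (s 1 : ℤ) ≤ (s 0 : ℤ) := by exact_mod_cast hs 0 1 (by omega)
    nlinarith [hih]

lemma admissible_of_psum (q : List ℤ) (h : ∀ i, 0 ≤ psum q i) : Admissible q := by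
  refine ⟨Set.univ, ⟨trivial, fun _ _ _ _ => trivial, by simp⟩, ?_⟩
  intro s _ hs
  have h0 := patEval_nonneg_aux q 0 s hs (fun i _ => by simpa using h i)
  rw [zero_mul, zero_add] at h0
  exact ⟨(patEval q s).toNat, trivial, Int.toNat_of_nonneg h0⟩

lemma psum_neg_witness (q : List ℤ) (h : ¬ ∀ i, 0 ≤ psum q i) :
    ∃ i, 1 ≤ i ∧ i ≤ q.length ∧ psum q i < 0 := by
  push_neg at h
  obtain ⟨i, hi⟩ := h
  refine ⟨min i q.length, ?_, min_le_right _ _, by rw [← psum_min]; exact hi⟩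
  rcases Nat.eq_zero_or_pos (min i q.length) with h0 | h0
  · exfalso
    rcases Nat.eq_zero_or_pos i with hi0 | hi0
    · rw [hi0] at hi; simp [psum_zero] at hi
    · have : q.length = 0 := by omega
      rw [psum_min, this] at hi; simp [psum_zero] at hi
  · omega

lemma not_admissible_of_psum (q : List ℤ) (h : ¬ ∀ i, 0 ≤ psum q i) : ¬ Admissible q := by
  obtain ⟨i, hi1, hin, hneg⟩ := psum_neg_witness q h
  rintro ⟨S, ⟨h0S, -, hfin⟩, hadm⟩
  -- pick N ∈ S with N ≥ 1
  obtain ⟨N, hNS, hN1⟩ : ∃ N, N ∈ S ∧ 1 ≤ N := by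
    by_contra hc
    push_neg at hc
    have : S ⊆ {0} := by
      intro x hx
      rcases Nat.eq_zero_or_pos x with h | h
      · simp [h]
      · exact absurd h (by have := hc x hx; omega)
    have : ({0}ᶜ : Set ℕ) ⊆ Sᶜ := Set.compl_subset_compl.2 this
    have hinf : ¬ ({0}ᶜ : Set ℕ).Finite := by
      intro hf
      have huniv : (Set.univ : Set ℕ).Finite := by
        refine (hf.union (Set.finite_singleton 0)).subset ?_
        intro x _
        by_cases h : x = 0 <;> simp [h]
      exact Set.infinite_univ huniv
    exact hinf (hfin.subset this)
  set s : ℕ → ℕ := fun j => if j < i then N else 0 with hs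
  have hmem : ∀ j, s j ∈ S := by
    intro j; by_cases h : j < i <;> simp [hs, h, hNS, h0S]
  have hanti : ∀ a b : ℕ, a ≤ b → s b ≤ s a := by
    intro a b hab; by_cases hb : b < i <;> by_cases ha : a < i <;> simp [hs, hb, ha] <;> omega
  obtain ⟨m, hmS, hm⟩ := hadm s hmem hanti
  have : patEval q s = psum q i * N := by
    rw [patEval, psum]
    rw [← Finset.sum_range_add_sum_Ico _ hin, Finset.sum_mul]
    have h1 : ∀ j ∈ Finset.range i, q.getD j 0 * (s j : ℤ) = q.getD j 0 * N := by
      intro j hj; simp only [Finset.mem_range] at hj; simp [hs, hj]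
    have h2 : ∀ j ∈ Finset.Ico i q.length, q.getD j 0 * (s j : ℤ) = 0 := by
      intro j hj; simp only [Finset.mem_Ico] at hj; simp [hs, Nat.not_lt.2 hj.1]
    rw [Finset.sum_congr rfl h1, Finset.sum_congr rfl h2]
    simp
  rw [this] at hm
  have : (0:ℤ) ≤ psum q i * N := hm ▸ Int.natCast_nonneg m
  nlinarith [hneg, (by exact_mod_cast hN1 : (1:ℤ) ≤ (N:ℤ))]

lemma admissible_iff (q : List ℤ) : Admissible q ↔ ∀ i, 0 ≤ psum q i := by
  constructor
  · intro h
    by_contra hc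
    exact not_admissible_of_psum q hc h
  · exact admissible_of_psum q


lemma pderiv_nil : pderiv [] = [] := rfl

lemma pderiv_iter_nil (m : ℕ) : pderiv^[m] ([] : List ℤ) = [] := by
  induction m with
  | zero => rfl
  | succ n ih => rw [Function.iterate_succ_apply', ih]; rfl

lemma iter_ne_nil {p : List ℤ} {m m' : ℕ} (h : m ≤ m') (hne : pderiv^[m'] p ≠ []) :
    pderiv^[m] p ≠ [] := by
  intro hnil
  apply hne
  obtain ⟨d, rfl⟩ := Nat.exists_eq_add_of_le h
  rw [Nat.add_comm, Function.iterate_add_apply, hnil, pderiv_iter_nil]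

/-- Number of head-drops during the first `m` derivative steps. -/
def dcount (p : List ℤ) : ℕ → ℕ
  | 0 => 0
  | m+1 => dcount p m +
      (if dcount p m < p.length ∧ psum p (dcount p m + 1) = m + 1 then 1 else 0)

lemma dcount_succ (p : List ℤ) (m : ℕ) : dcount p (m+1) = dcount p m +
    (if dcount p m < p.length ∧ psum p (dcount p m + 1) = m + 1 then 1 else 0) := rfl

lemma dcount_mono (p : List ℤ) : Monotone (dcount p) := by
  apply monotone_nat_of_le_succ
  intro m
  rw [dcount_succ]
  split <;> omega

lemma dcount_incr {p : List ℤ} {m : ℕ} (h : dcount p (m+1) ≠ dcount p m) :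
    dcount p (m+1) = dcount p m + 1 ∧ psum p (dcount p m + 1) = (m:ℤ) + 1 ∧
      dcount p m < p.length := by
  by_cases hc : dcount p m < p.length ∧ psum p (dcount p m + 1) = m + 1
  · refine ⟨?_, by exact_mod_cast hc.2, hc.1⟩
    rw [dcount_succ, if_pos hc]
  · exfalso; apply h; rw [dcount_succ, if_neg hc, add_zero]

/-- Main invariant on iterated derivatives. -/
lemma invariant (p : List ℤ) : ∀ m : ℕ, pderiv^[m] p ≠ [] →
    (pderiv^[m] p).length = p.length - dcount p m ∧
    ∀ i, 1 ≤ i → psum (pderiv^[m] p) i = psum p (i + dcount p m) - m := by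
  intro m
  induction m with
  | zero => intro _; simp [dcount]
  | succ m ih =>
    intro hne
    have hne' : pderiv^[m] p ≠ [] := iter_ne_nil (Nat.le_succ m) hne
    obtain ⟨hlen, hps⟩ := ih hne'
    set q := pderiv^[m] p with hq
    obtain ⟨a, q₂, hcons⟩ : ∃ a q₂, q = a :: q₂ := by
      cases hq' : q with
      | nil => exact absurd hq' hne'
      | cons a q₂ => exact ⟨a, q₂, rfl⟩
    have hd_lt : dcount p m < p.length := by
      have : q.length ≠ 0 := by simpa using hne'
      omega
    have hhead : a = psum p (1 + dcount p m) - m := by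
      have := hps 1 le_rfl
      rw [hcons] at this
      simpa [psum_cons, psum_zero] using this
    have hstep : pderiv^[m+1] p = pderiv q := by
      rw [Function.iterate_succ_apply', hq]
    by_cases ha : a = 1
    · -- drop case
      have hcond : dcount p m < p.length ∧ psum p (dcount p m + 1) = (m:ℤ) + 1 := by
        constructor
        · exact hd_lt
        · have : psum p (1 + dcount p m) = (m:ℤ) + 1 := by omega
          rwa [Nat.add_comm] at this
      have hdc : dcount p (m+1) = dcount p m + 1 := by
        rw [dcount_succ, if_pos (by exact_mod_cast hcond)]
      have hq' : pderiv^[m+1] p = q₂ := by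
        rw [hstep, hcons, pderiv, if_pos ha]
      constructor
      · rw [hq', hdc]
        have : q.length = q₂.length + 1 := by rw [hcons]; simp
        omega
      · intro i hi
        rw [hq', hdc]
        have h1 : psum q (i + 1) = psum p (i + 1 + dcount p m) - m := hps (i+1) (by omega)
        rw [hcons, psum_cons, ha] at h1
        have : i + 1 + dcount p m = i + (dcount p m + 1) := by omega
        rw [this] at h1
        push_cast
        omega
    · -- no-drop case
      have hcond : ¬ (dcount p m < p.length ∧ psum p (dcount p m + 1) = m + 1) := by
        rintro ⟨-, hc2⟩
        apply ha
        rw [hhead, Nat.add_comm]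
        rw [hc2]
        push_cast
        ring
      have hdc : dcount p (m+1) = dcount p m := by
        rw [dcount_succ, if_neg hcond, add_zero]
      have hq' : pderiv^[m+1] p = (a - 1) :: q₂ := by
        rw [hstep, hcons, pderiv, if_neg ha]
      constructor
      · rw [hq', hdc, ← hlen, hcons]; simp
      · intro i hi
        rw [hq', hdc]
        obtain ⟨j, rfl⟩ : ∃ j, i = j + 1 := ⟨i - 1, by omega⟩
        rw [psum_cons]
        have h1 : psum q (j + 1) = psum p (j + 1 + dcount p m) - m := hps (j+1) (by omega)
        rw [hcons, psum_cons] at h1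
        push_cast
        omega

/-- Every dropped index was dropped at a specific step, whose value is the partial sum. -/
lemma drop_step (p : List ℤ) (M : ℕ) : ∀ j, 1 ≤ j → j ≤ dcount p M →
    ∃ m, m < M ∧ psum p j = (m:ℤ) + 1 ∧ dcount p m = j - 1 ∧ dcount p (m+1) = j := by
  induction M with
  | zero => intro j h1 h2; simp [dcount] at h2; omega
  | succ M ih =>
    intro j h1 h2
    by_cases hle : j ≤ dcount p M
    · obtain ⟨m, hm, h⟩ := ih j h1 hle
      exact ⟨m, by omega, h⟩
    · have hne : dcount p (M+1) ≠ dcount p M := by omega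
      obtain ⟨he, hv, -⟩ := dcount_incr hne
      have hj : j = dcount p M + 1 := by omega
      exact ⟨M, by omega, by rw [hj]; exact hv, by omega, by omega⟩

/-- Strict increase of partial sums along dropped indices. -/
lemma chain_strict (p : List ℤ) (M : ℕ) {i j : ℕ} (h1 : 1 ≤ i) (hij : i < j)
    (hj : j ≤ dcount p M) : psum p i < psum p j := by
  obtain ⟨mi, -, hvi, -, hdi⟩ := drop_step p M i h1 (by omega)
  obtain ⟨mj, -, hvj, -, hdj2⟩ := drop_step p M j (by omega) hj
  have hmm : mi + 1 ≤ mj := by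
    by_contra hc
    have := dcount_mono p (show mj + 1 ≤ mi + 1 from by omega)
    rw [hdj2, hdi] at this
    omega
  rw [hvi, hvj]
  push_cast
  omega

lemma chain_le (p : List ℤ) (M : ℕ) {j : ℕ} (h1 : 1 ≤ j) (hj : j ≤ dcount p M) :
    1 ≤ psum p j ∧ psum p j ≤ (M:ℤ) := by
  obtain ⟨m, hm, hv, -, -⟩ := drop_step p M j h1 hj
  rw [hv]
  constructor <;> [omega; push_cast] <;> omega

/-- If partial sums form a strict chain up to `t`, index `t` is dropped by the time
the partial sum value is reached. -/
lemma chain_forces_drop (p : List ℤ) (t : ℕ) (ht : t ≤ p.length)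
    (hchain : ∀ j, 1 ≤ j → j ≤ t → psum p (j-1) < psum p j) :
    ∀ j, j ≤ t → ∀ m : ℕ, psum p j ≤ (m:ℤ) → j ≤ dcount p m := by
  intro j
  induction j with
  | zero => intro _ m _; omega
  | succ j ih =>
    intro hjt m hm
    have hpos : ∀ i, i ≤ t → 0 ≤ psum p i ∧ (i:ℤ) ≤ psum p i := by
      intro i hit
      induction i with
      | zero => simp [psum_zero]
      | succ i ih2 =>
        have h2 := ih2 (by omega)
        have := hchain (i+1) (by omega) hit
        simp only [Nat.add_sub_cancel] at this
        push_cast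
        omega
    have hj1 : (1:ℤ) ≤ psum p (j+1) := by
      have := hpos (j+1) hjt
      push_cast at this
      omega
    set m₁ : ℕ := (psum p (j+1)).toNat - 1 with hm₁
    have hm₁v : psum p (j+1) = (m₁:ℤ) + 1 := by
      have := Int.toNat_of_nonneg (show 0 ≤ psum p (j+1) by omega)
      push_cast
      omega
    have hchain_j : psum p j < psum p (j+1) := by
      have := hchain (j+1) (by omega) hjt
      simpa using this
    have hihm : j ≤ dcount p m₁ := ih (by omega) m₁ (by omega)
    have hm₁m : m₁ + 1 ≤ m := by omega
    by_cases hdj : j + 1 ≤ dcount p m₁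
    · exact le_trans hdj (dcount_mono p (by omega))
    · have hdeq : dcount p m₁ = j := by omega
      have hstep : dcount p (m₁+1) = j + 1 := by
        rw [dcount_succ, hdeq, if_pos ⟨by omega, by rw [hm₁v]⟩]
      calc j + 1 = dcount p (m₁+1) := hstep.symm
        _ ≤ dcount p m := dcount_mono p hm₁m


lemma adDeg_facts {p : List ℤ} {k : ℕ} (h : adDeg p = (k : ℕ∞)) :
    ¬ Admissible (pderiv^[k] p) ∧ ∀ m, m < k → Admissible (pderiv^[m] p) := by
  have hAne : {m : ℕ | ¬ Admissible (pderiv^[m] p)}.Nonempty := by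
    by_contra hc
    rw [Set.not_nonempty_iff_eq_empty] at hc
    rw [adDeg, hc, Set.image_empty, sInf_empty] at h
    exact WithTop.coe_ne_top h.symm
  have hle : ∀ m ∈ {m : ℕ | ¬ Admissible (pderiv^[m] p)}, adDeg p ≤ (m : ℕ∞) :=
    fun m hm => sInf_le ⟨m, hm, rfl⟩
  have hk : k = sInf {m : ℕ | ¬ Admissible (pderiv^[m] p)} := by
    apply le_antisymm
    · have := hle _ (Nat.sInf_mem hAne)
      rw [h] at this
      exact_mod_cast this
    · have h2 : ((sInf {m : ℕ | ¬ Admissible (pderiv^[m] p)} : ℕ) : ℕ∞) ≤ adDeg p := by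
        apply le_sInf
        rintro x ⟨m, hm, rfl⟩
        exact Nat.cast_le.mpr (Nat.sInf_le hm)
      rw [h] at h2
      exact_mod_cast h2
  constructor
  · rw [hk]; exact Nat.sInf_mem hAne
  · intro m hm
    by_contra hc
    have := Nat.sInf_le (show m ∈ {m : ℕ | ¬ Admissible (pderiv^[m] p)} from hc)
    omega

lemma admissible_nil : Admissible ([] : List ℤ) := by
  rw [admissible_iff]
  intro i
  simp [psum]

lemma one_lt_adDeg_nil : 1 < adDeg ([] : List ℤ) := by
  have : {m : ℕ | ¬ Admissible (pderiv^[m] ([] : List ℤ))} = ∅ := by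
    ext m
    simp [pderiv_iter_nil, admissible_nil]
  rw [adDeg, this]
  simp only [Set.image_empty, sInf_empty]
  exact lt_of_lt_of_le (by norm_num : (1:ℕ∞) < 2) le_top

lemma one_lt_adDeg_iff' {q : List ℤ} (h0 : Admissible q) (h1 : Admissible (pderiv q)) :
    1 < adDeg q := by
  have h2 : ∀ x ∈ ((fun m : ℕ => (m : ℕ∞)) '' {m : ℕ | ¬ Admissible (pderiv^[m] q)}),
      (2 : ℕ∞) ≤ x := by
    rintro x ⟨m, hm, rfl⟩
    simp only [Set.mem_setOf_eq] at hm
    have : 2 ≤ m := by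
      by_contra hc
      interval_cases m
      · exact hm h0
      · rw [Function.iterate_one] at hm; exact hm h1
    show (2 : ℕ∞) ≤ (m : ℕ∞)
    exact_mod_cast this
  calc (1 : ℕ∞) < 2 := by norm_num
    _ ≤ adDeg q := le_sInf h2

lemma adm_of_one_lt_adDeg {q : List ℤ} (h : 1 < adDeg q) :
    Admissible q ∧ Admissible (pderiv q) := by
  constructor
  · by_contra hc
    have : adDeg q ≤ ((0:ℕ) : ℕ∞) := sInf_le ⟨0, hc, rfl⟩
    simp at this
    rw [this] at h
    exact absurd h (by norm_num)
  · by_contra hc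
    have : adDeg q ≤ ((1:ℕ) : ℕ∞) := sInf_le ⟨1, by rwa [Set.mem_setOf_eq, Function.iterate_one], rfl⟩
    rw [Nat.cast_one] at this
    exact absurd (lt_of_lt_of_le h this) (lt_irrefl _)

-- sums over Icc

lemma sum_Icc_coeff (p : List ℤ) (m : ℕ) :
    ∑ i ∈ Finset.Icc 1 m, coeffFn p i = psum p m := by
  induction m with
  | zero => simp [psum_zero]
  | succ m ih =>
    rw [Finset.sum_Icc_succ_top (by omega), ih, psum_succ]
    simp [coeffFn]

lemma sum_split (f : ℕ → ℤ) {a b : ℕ} (hab : a ≤ b) :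
    ∑ i ∈ Finset.Icc 1 b, f i =
      (∑ i ∈ Finset.Icc 1 a, f i) + ∑ i ∈ Finset.Icc (a+1) b, f i := by
  rw [Finset.Icc_add_one_left_eq_Ioc a b, show (1:ℕ) = 0 + 1 from rfl, Finset.Icc_add_one_left_eq_Ioc,
    Finset.Icc_add_one_left_eq_Ioc]
  exact (Finset.sum_Ioc_consecutive f (Nat.zero_le a) hab).symm

lemma sum_Icc_zero_left (f : ℕ → ℤ) (b : ℕ) :
    ∑ i ∈ Finset.Icc 0 b, f i = f 0 + ∑ i ∈ Finset.Icc 1 b, f i := by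
  have he : Finset.Icc 0 b = insert 0 (Finset.Icc 1 b) := by
    ext x
    simp only [Finset.mem_Icc, Finset.mem_insert]
    omega
  rw [he, Finset.sum_insert (by simp)]

-- segList

lemma segList_length (f : ℕ → ℤ) (a b : ℕ) : (segList f a b).length = b + 1 - a := by
  simp [segList]

lemma segList_getD (f : ℕ → ℤ) (a b : ℕ) {i : ℕ} (h : i < b + 1 - a) :
    (segList f a b).getD i 0 = f (a + i) := by
  rw [List.getD_eq_getElem _ _ (by simpa [segList_length] using h)]
  simp [segList]

lemma psum_segList (f : ℕ → ℤ) (t n : ℕ) :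
    ∀ i : ℕ, i ≤ n - t → t ≤ n →
      psum (segList f (t+1) n) i = ∑ j ∈ Finset.Icc (t+1) (t+i), f j := by
  intro i
  induction i with
  | zero => intro _ _; simp [psum_zero]
  | succ i ih =>
    intro hi htn
    rw [psum_succ, ih (by omega) htn, segList_getD f (t+1) n (by omega),
      show t + (i+1) = (t + i) + 1 from rfl,
      Finset.sum_Icc_succ_top (by omega),
      show t + 1 + i = t + i + 1 from by omega]


lemma psum_ge_one_of_adDeg {q : List ℤ} (h : 1 < adDeg q) (hh : q.getD 0 0 ≠ 0) :
    ∀ i, 1 ≤ i → 1 ≤ psum q i := by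
  obtain ⟨h0, h1⟩ := adm_of_one_lt_adDeg h
  rw [admissible_iff] at h0 h1
  obtain ⟨a, q₂, rfl⟩ : ∃ a q₂, q = a :: q₂ := by
    cases q with
    | nil => simp at hh
    | cons a q₂ => exact ⟨a, q₂, rfl⟩
  intro i hi
  obtain ⟨j, rfl⟩ : ∃ j, i = j + 1 := ⟨i - 1, by omega⟩
  rw [psum_cons]
  by_cases ha1 : a = 1
  · rw [pderiv, if_pos ha1] at h1
    have := h1 j
    omega
  · rw [pderiv, if_neg ha1] at h1
    have := h1 (j+1)
    rw [psum_cons] at this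
    omega

lemma one_lt_adDeg_of_psum {q : List ℤ} (h : ∀ i, 1 ≤ i → i ≤ q.length → 1 ≤ psum q i) :
    1 < adDeg q := by
  cases q with
  | nil => exact one_lt_adDeg_nil
  | cons a q₂ =>
    have hall : ∀ i, 1 ≤ i → 1 ≤ psum (a :: q₂) i := by
      intro i hi
      rw [psum_min]
      exact h _ (by simp; omega) (by simp)
    have ha : 1 ≤ a := by
      have := hall 1 le_rfl
      rwa [psum_cons, psum_zero, add_zero] at this
    apply one_lt_adDeg_iff'
    · rw [admissible_iff]
      intro i
      cases i with
      | zero => simp [psum_zero]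
      | succ j => have := hall (j+1) (by omega); omega
    · rw [admissible_iff]
      by_cases ha1 : a = 1
      · rw [pderiv, if_pos ha1]
        intro i
        have := hall (i+1) (by omega)
        rw [psum_cons, ha1] at this
        omega
      · rw [pderiv, if_neg ha1]
        intro i
        cases i with
        | zero => simp [psum_zero]
        | succ j =>
          rw [psum_cons]
          have := hall (j+1) (by omega)
          rw [psum_cons] at this
          omega

lemma coeff_psum (p : List ℤ) {i : ℕ} (hi : 1 ≤ i) :
    coeffFn p i = psum p i - psum p (i-1) := by
  obtain ⟨j, rfl⟩ : ∃ j, i = j + 1 := ⟨i - 1, by omega⟩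
  rw [psum_succ]
  simp [coeffFn]

lemma coeff_ne {p : List ℤ} (hp : ∀ a ∈ p, a ≠ 0) {i : ℕ} (hi1 : 1 ≤ i)
    (hin : i ≤ p.length) : coeffFn p i ≠ 0 := by
  have hlt : i - 1 < p.length := by omega
  rw [coeffFn, if_neg (by omega), List.getD_eq_getElem _ _ hlt]
  exact hp _ (List.getElem_mem hlt)

lemma coeff_zero_of_gt {p : List ℤ} {i : ℕ} (hi : p.length < i) : coeffFn p i = 0 := by
  rw [coeffFn]
  split
  · rfl
  · exact List.getD_eq_default _ _ (by omega)

end SD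

open SD

/-- Standard decomposition: every admissible pattern with finite admissibility
degree k can be written uniquely as p = H_p(x₁,…,x_h) + C_p(x_h,…,x_t) +
T_p(x_{t+1},…,xₙ), where either H_p = 0 or all coefficients of H_p are positive
with sum k − 1, C_p is admissible with coefficient sum zero, and ad(T_p) > 1. -/


theorem stmt_2 (p : List ℤ) (hp : ∀ a ∈ p, a ≠ 0) (hadm : Admissible p)
    (k : ℕ) (hdeg : adDeg p = (k : ℕ∞)) :
    ∃! HCT : (ℕ → ℤ) × (ℕ → ℤ) × (ℕ → ℤ),
      ∃ h t : ℕ, h ≤ t ∧ t ≤ p.length ∧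
        -- p = H + C + T
        (∀ i : ℕ, coeffFn p i = HCT.1 i + HCT.2.1 i + HCT.2.2 i) ∧
        -- head: supported on {1,…,h}, positive coefficients, sum = ad(p) − 1
        (∀ i : ℕ, i ∉ Finset.Icc 1 h → HCT.1 i = 0) ∧
        (∀ i ∈ Finset.Icc 1 h, 0 < HCT.1 i) ∧
        (∑ i ∈ Finset.Icc 1 h, HCT.1 i) = (k : ℤ) - 1 ∧
        -- center: supported on {h,…,t}, admissible, coefficient sum zero
        (∀ i : ℕ, i ∉ Finset.Icc h t → HCT.2.1 i = 0) ∧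
        (∀ m ∈ Finset.Icc h t, 0 ≤ ∑ i ∈ Finset.Icc h m, HCT.2.1 i) ∧
        (∑ i ∈ Finset.Icc h t, HCT.2.1 i) = 0 ∧
        HCT.2.1 t ≠ 0 ∧
        -- tail: supported on {t+1,…,n}, admissibility degree > 1
        (∀ i : ℕ, i ∉ Finset.Icc (t + 1) p.length → HCT.2.2 i = 0) ∧
        1 < adDeg (segList HCT.2.2 (t + 1) p.length) := by
  set n := p.length with hn
  obtain ⟨hk1, hadm_m⟩ := adDeg_facts hdeg
  have hp_adm : ∀ i, 0 ≤ psum p i := (admissible_iff p).mp hadm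
  have hkpos : 1 ≤ k := by
    rcases Nat.eq_zero_or_pos k with rfl | h
    · exact absurd hadm hk1
    · exact h
  have hkne : pderiv^[k] p ≠ [] := fun hnil => hk1 (by rw [hnil]; exact admissible_nil)
  have hk1ne : pderiv^[k-1] p ≠ [] := iter_ne_nil (by omega) hkne
  obtain ⟨hlenk, hpsk⟩ := invariant p k hkne
  obtain ⟨hlenk1, hpsk1⟩ := invariant p (k-1) hk1ne
  set dK := dcount p k with hdK
  set dK1 := dcount p (k-1) with hdK1
  have hdmono : dK1 ≤ dK := dcount_mono p (by omega)
  have hdKn : dK < n := by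
    have h1 : (pderiv^[k] p).length ≠ 0 := by simpa using hkne
    omega
  have hG1 : ∀ j, dK1 < j → (k:ℤ) - 1 ≤ psum p j := by
    have hadmk1 : ∀ i, 0 ≤ psum (pderiv^[k-1] p) i :=
      (admissible_iff _).mp (hadm_m (k-1) (by omega))
    have hmain : ∀ j, dK1 < j → j ≤ n → (k:ℤ) - 1 ≤ psum p j := by
      intro j hj hjn
      have h1 := hadmk1 (j - dK1)
      rw [hpsk1 (j - dK1) (by omega)] at h1
      have hje : j - dK1 + dK1 = j := by omega
      rw [hje] at h1
      omega
    intro j hj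
    rcases le_or_gt j n with hjn | hjn
    · exact hmain j hj hjn
    · rw [psum_of_le p (le_of_lt hjn)]
      exact hmain n (by omega) le_rfl
  -- witness with psum = k - 1
  have hnadm : ¬ ∀ i, 0 ≤ psum (pderiv^[k] p) i := fun hc => hk1 (admissible_of_psum _ hc)
  obtain ⟨i₀, hi₀1, hi₀le, hi₀neg⟩ := psum_neg_witness _ hnadm
  rw [hpsk i₀ hi₀1] at hi₀neg
  have ht0n : i₀ + dK ≤ n := by rw [hlenk] at hi₀le; omega
  have ht0v : psum p (i₀ + dK) = (k:ℤ) - 1 := le_antisymm (by omega) (hG1 _ (by omega))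
  -- definition of t
  set Tset := (Finset.Icc 1 n).filter (fun j => psum p j = (k:ℤ) - 1) with hTset
  have hTmem : ∀ j, j ∈ Tset ↔ (1 ≤ j ∧ j ≤ n ∧ psum p j = (k:ℤ) - 1) := by
    intro j
    simp [hTset, Finset.mem_filter, Finset.mem_Icc, and_assoc]
  have hTne : Tset.Nonempty := ⟨i₀ + dK, (hTmem _).mpr ⟨by omega, ht0n, ht0v⟩⟩
  set t := Tset.max' hTne with ht
  have htprop := (hTmem t).mp (Tset.max'_mem hTne)
  obtain ⟨ht1, htn, htv⟩ := htprop
  have htmax : ∀ j, j ∈ Tset → j ≤ t := fun j hj => Tset.le_max' j hj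
  have htdK1 : dK1 < t := by
    have := Tset.le_max' (i₀ + dK) ((hTmem _).mpr ⟨by omega, ht0n, ht0v⟩)
    omega
  have h3 : ∀ j, t < j → j ≤ n → (k:ℤ) ≤ psum p j := by
    intro j hj hjn
    have hge := hG1 j (by omega)
    rcases eq_or_lt_of_le hge with heq | hlt
    · exact absurd (htmax j ((hTmem j).mpr ⟨by omega, hjn, heq.symm⟩)) (by omega)
    · omega
  -- definition of h
  have hHex : ∃ m, (k:ℤ) - 1 ≤ psum p m := ⟨t, ge_of_eq htv⟩
  set h := Nat.find hHex with hhdef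
  have hh_spec : (k:ℤ) - 1 ≤ psum p h := Nat.find_spec hHex
  have hh_min : ∀ m, m < h → psum p m < (k:ℤ) - 1 := by
    intro m hm
    have := Nat.find_min hHex hm
    omega
  have hht : h ≤ t := Nat.find_min' hHex (ge_of_eq htv)
  have hh0k : h = 0 → k = 1 := by
    intro h0
    rw [h0, psum_zero] at hh_spec
    omega
  have hk1h : k = 1 → h = 0 := by
    intro hk1'
    have : (k:ℤ) - 1 ≤ psum p 0 := by rw [psum_zero, hk1']; norm_num
    have := Nat.find_min' hHex this
    omega
  have hG4 : ∀ m, 1 ≤ m → psum p m < (k:ℤ) - 1 → m ≤ dK1 := by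
    intro m h1 h2
    by_contra hc
    exact absurd (hG1 m (by omega)) (by omega)
  have h2cond : ∀ m, h ≤ m → m ≤ t → (k:ℤ) - 1 ≤ psum p m := by
    intro m hm hmt
    by_contra hc
    push_neg at hc
    have hm1 : 1 ≤ m := by
      rcases Nat.eq_zero_or_pos m with rfl | hpos
      · rw [psum_zero] at hc
        have := hh0k (by omega)
        omega
      · exact hpos
    have hmdK1 : m ≤ dK1 := hG4 m hm1 hc
    have hh1 : 1 ≤ h := by
      rcases Nat.eq_zero_or_pos h with h0 | hpos
      · have := hh0k h0
        subst this
        have := hp_adm m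
        simp at hc
        omega
      · exact hpos
    have hhm : h < m := by
      rcases eq_or_lt_of_le hm with rfl | hlt
      · exact absurd hh_spec (by omega)
      · exact hlt
    have := chain_strict p (k-1) hh1 hhm hmdK1
    omega
  have hcoeff_pos : ∀ i, 1 ≤ i → i < h → 1 ≤ coeffFn p i := by
    intro i hi1 hih
    have hin : i ≤ n := by omega
    have hcp := coeff_psum p hi1
    rcases Nat.eq_or_lt_of_le hi1 with rfl | hi2
    · have h0 := hp_adm 1
      have hne := coeff_ne hp le_rfl hin
      rw [hcp] at hne ⊢
      rw [psum_zero] at hne ⊢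
      omega
    · have hidK : i ≤ dK1 := hG4 i hi1 (hh_min i hih)
      have hi1dK : i - 1 ≤ dK1 := by omega
      have := chain_strict p (k-1) (show 1 ≤ i - 1 by omega) (show i - 1 < i by omega) hidK
      omega
  have hhlt : h < t := by
    rcases eq_or_lt_of_le hht with heq | hlt
    · exfalso
      have hchain : ∀ j, 1 ≤ j → j ≤ t → psum p (j-1) < psum p j := by
        intro j hj1 hjt
        rcases Nat.eq_or_lt_of_le hjt with hjt2 | hjlt
        · -- j = t
          rw [hjt2, htv]
          exact hh_min (t-1) (by omega)
        · -- j < t = h so j < h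
          have hjh : j < h := by omega
          have := hcoeff_pos j hj1 hjh
          rw [coeff_psum p hj1] at this
          omega
      have hdrop : t ≤ dK1 := by
        have := chain_forces_drop p t htn hchain t le_rfl (k-1)
          (by rw [htv]; push_cast; omega)
        exact this
      apply hk1
      apply admissible_of_psum
      intro i
      rcases Nat.eq_zero_or_pos i with rfl | hi1
      · simp [psum_zero]
      · rw [psum_min, hlenk]
        have hlen1 : 1 ≤ n - dK := by omega
        set i' := min i (n - dK) with hi'
        have hi'1 : 1 ≤ i' := by omega
        have hi'le : i' ≤ n - dK := by omega
        rw [hpsk i' hi'1]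
        have := h3 (i' + dK) (by omega) (by omega)
        omega
    · exact hlt
  -- canonical decomposition
  set H : ℕ → ℤ := fun i => if 1 ≤ i ∧ i ≤ h then
      (if i = h then (k:ℤ) - 1 - psum p (h-1) else coeffFn p i) else 0 with hHdef
  set C : ℕ → ℤ := fun i => if i = h then psum p h - ((k:ℤ) - 1)
      else if h < i ∧ i ≤ t then coeffFn p i else 0 with hCdef
  set T : ℕ → ℤ := fun i => if t + 1 ≤ i ∧ i ≤ n then coeffFn p i else 0 with hTdef
  have hdecomp : ∀ i, coeffFn p i = H i + C i + T i := by
    intro i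
    by_cases hi0 : i = 0
    · subst hi0
      simp only [hHdef, hCdef, hTdef]
      rw [if_neg (show ¬(1 ≤ 0 ∧ 0 ≤ h) from by omega),
        if_neg (show ¬(t + 1 ≤ 0 ∧ 0 ≤ n) from by omega)]
      by_cases h0 : (0:ℕ) = h
      · rw [if_pos h0, ← h0, psum_zero, hh0k h0.symm]
        simp [coeffFn]
      · rw [if_neg h0, if_neg (show ¬(h < 0 ∧ 0 ≤ t) from by omega)]
        simp [coeffFn]
    · have hi1 : 1 ≤ i := by omega
      by_cases hih : i < h
      · simp only [hHdef, hCdef, hTdef]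
        rw [if_pos (show 1 ≤ i ∧ i ≤ h from ⟨hi1, by omega⟩),
          if_neg (show ¬ i = h from by omega),
          if_neg (show ¬ i = h from by omega),
          if_neg (show ¬(h < i ∧ i ≤ t) from by omega),
          if_neg (show ¬(t + 1 ≤ i ∧ i ≤ n) from by omega)]
        ring
      · by_cases hieq : i = h
        · simp only [hHdef, hCdef, hTdef]
          rw [if_pos (show 1 ≤ i ∧ i ≤ h from ⟨hi1, by omega⟩), if_pos hieq, if_pos hieq,
            if_neg (show ¬(t + 1 ≤ i ∧ i ≤ n) from by omega)]
          rw [hieq, coeff_psum p (show 1 ≤ h from by omega)]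
          ring
        · by_cases hit : i ≤ t
          · simp only [hHdef, hCdef, hTdef]
            rw [if_neg (show ¬(1 ≤ i ∧ i ≤ h) from by omega),
              if_neg hieq,
              if_pos (show h < i ∧ i ≤ t from ⟨by omega, hit⟩),
              if_neg (show ¬(t + 1 ≤ i ∧ i ≤ n) from by omega)]
            ring
          · by_cases hin : i ≤ n
            · simp only [hHdef, hCdef, hTdef]
              rw [if_neg (show ¬(1 ≤ i ∧ i ≤ h) from by omega),
                if_neg hieq,
                if_neg (show ¬(h < i ∧ i ≤ t) from by omega),
                if_pos (show t + 1 ≤ i ∧ i ≤ n from ⟨by omega, hin⟩)]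
              ring
            · simp only [hHdef, hCdef, hTdef]
              rw [if_neg (show ¬(1 ≤ i ∧ i ≤ h) from by omega),
                if_neg hieq,
                if_neg (show ¬(h < i ∧ i ≤ t) from by omega),
                if_neg (show ¬(t + 1 ≤ i ∧ i ≤ n) from by omega),
                coeff_zero_of_gt (show p.length < i from by omega)]
              ring
  have hHsupp : ∀ i, i ∉ Finset.Icc 1 h → H i = 0 := by
    intro i hi
    rw [Finset.mem_Icc] at hi
    simp only [hHdef]
    rw [if_neg hi]
  have hHpos : ∀ i ∈ Finset.Icc 1 h, 0 < H i := by
    intro i hi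
    rw [Finset.mem_Icc] at hi
    simp only [hHdef]
    rw [if_pos hi]
    by_cases hieq : i = h
    · rw [if_pos hieq]
      have := hh_min (h-1) (by omega)
      omega
    · rw [if_neg hieq]
      have := hcoeff_pos i hi.1 (by omega)
      omega
  have hHsum : ∑ i ∈ Finset.Icc 1 h, H i = (k:ℤ) - 1 := by
    rcases Nat.eq_zero_or_pos h with h0 | hh1
    · rw [h0, hh0k h0]
      simp
    · have he : h - 1 + 1 = h := by omega
      rw [← he, Finset.sum_Icc_succ_top (by omega)]
      have hcong : ∑ i ∈ Finset.Icc 1 (h-1), H i = ∑ i ∈ Finset.Icc 1 (h-1), coeffFn p i := by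
        apply Finset.sum_congr rfl
        intro i hi
        rw [Finset.mem_Icc] at hi
        simp only [hHdef]
        rw [if_pos (show 1 ≤ i ∧ i ≤ h from ⟨hi.1, by omega⟩),
          if_neg (show ¬ i = h from by omega)]
      rw [hcong, sum_Icc_coeff]
      simp only [hHdef]
      rw [if_pos (show 1 ≤ h - 1 + 1 ∧ h - 1 + 1 ≤ h from by omega), if_pos he]
      ring
  have hCsupp : ∀ i, i ∉ Finset.Icc h t → C i = 0 := by
    intro i hi
    rw [Finset.mem_Icc] at hi
    push_neg at hi
    simp only [hCdef]
    rw [if_neg (show ¬ i = h by intro e; have := hi (by omega); omega),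
      if_neg (show ¬(h < i ∧ i ≤ t) by rintro ⟨a, b⟩; have := hi (by omega); omega)]
  have hCsum : ∀ m, h ≤ m → m ≤ t → ∑ i ∈ Finset.Icc h m, C i = psum p m - ((k:ℤ) - 1) := by
    have key : ∀ d, h + d ≤ t → ∑ i ∈ Finset.Icc h (h+d), C i = psum p (h+d) - ((k:ℤ)-1) := by
      intro d
      induction d with
      | zero =>
        intro _
        rw [Nat.add_zero, Finset.Icc_self, Finset.sum_singleton]
        simp only [hCdef]
        simp
      | succ d ih =>
        intro hd
        rw [show h + (d+1) = (h+d) + 1 from rfl, Finset.sum_Icc_succ_top (by omega),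
          ih (by omega)]
        have hCval : C (h+d+1) = coeffFn p (h+d+1) := by
          simp only [hCdef]
          rw [if_neg (show ¬ h + d + 1 = h from by omega),
            if_pos (show h < h + d + 1 ∧ h + d + 1 ≤ t from ⟨by omega, by omega⟩)]
        rw [hCval, coeff_psum p (by omega), show h + d + 1 - 1 = h + d from by omega]
        ring
    intro m hm hmt
    rw [show m = h + (m - h) from by omega]
    exact key (m-h) (by omega)
  have hCpartial : ∀ m ∈ Finset.Icc h t, 0 ≤ ∑ i ∈ Finset.Icc h m, C i := by
    intro m hm
    rw [Finset.mem_Icc] at hm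
    rw [hCsum m hm.1 hm.2]
    have := h2cond m hm.1 hm.2
    omega
  have hCtotal : ∑ i ∈ Finset.Icc h t, C i = 0 := by
    rw [hCsum t hht le_rfl, htv]
    ring
  have hCt : C t ≠ 0 := by
    simp only [hCdef]
    rw [if_neg (show ¬ t = h from by omega),
      if_pos (show h < t ∧ t ≤ t from ⟨hhlt, le_rfl⟩)]
    exact coeff_ne hp (by omega) htn
  have hTsupp : ∀ i, i ∉ Finset.Icc (t+1) n → T i = 0 := by
    intro i hi
    rw [Finset.mem_Icc] at hi
    simp only [hTdef]
    rw [if_neg hi]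
  have hTail : 1 < adDeg (segList T (t+1) n) := by
    apply one_lt_adDeg_of_psum
    intro i hi1 hile
    rw [segList_length] at hile
    have hint : i ≤ n - t := by omega
    rw [psum_segList T t n i hint htn]
    have hcong : ∑ j ∈ Finset.Icc (t+1) (t+i), T j
        = ∑ j ∈ Finset.Icc (t+1) (t+i), coeffFn p j := by
      apply Finset.sum_congr rfl
      intro j hj
      rw [Finset.mem_Icc] at hj
      simp only [hTdef]
      rw [if_pos (show t + 1 ≤ j ∧ j ≤ n from ⟨hj.1, by omega⟩)]
    have hsum : ∑ j ∈ Finset.Icc (t+1) (t+i), coeffFn p j = psum p (t+i) - psum p t := by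
      have hsp := sum_split (coeffFn p) (show t ≤ t + i from by omega)
      rw [sum_Icc_coeff, sum_Icc_coeff] at hsp
      omega
    rw [hcong, hsum, htv]
    have := h3 (t+i) (by omega) (by omega)
    omega
  refine ⟨(H, C, T), ⟨h, t, le_of_lt hhlt, htn, hdecomp, hHsupp, hHpos, hHsum,
    hCsupp, hCpartial, hCtotal, hCt, hTsupp, hTail⟩, ?_⟩
  rintro ⟨H', C', T'⟩ ⟨h', t', hh't', ht'n, u1, u2, u3, u4, u5, u6, u7, u8, u9, u10⟩
  simp only at u1 u2 u3 u4 u5 u6 u7 u8 u9 u10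
  -- step A
  have hA : h' < t' := by
    rcases eq_or_lt_of_le hh't' with heq | hlt
    · exfalso
      rw [heq, Finset.Icc_self, Finset.sum_singleton] at u7
      exact u8 u7
    · exact hlt
  have ht'1 : 1 ≤ t' := by omega
  -- step B
  have hC'0 : C' 0 = 0 := by
    rcases Nat.eq_zero_or_pos h' with h0 | h1
    · have hu := u1 0
      have hH0 : H' 0 = 0 := u2 0 (by rw [Finset.mem_Icc]; omega)
      have hT0 : T' 0 = 0 := u9 0 (by rw [Finset.mem_Icc]; omega)
      rw [hH0, hT0] at hu
      simp [coeffFn] at hu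
      omega
    · exact u5 0 (by rw [Finset.mem_Icc]; omega)
  have hT'zero : ∀ i, i ≤ t' → T' i = 0 := fun i hi =>
    u9 i (by rw [Finset.mem_Icc]; omega)
  have hH'zero : ∀ i, h' < i → H' i = 0 := fun i hi =>
    u2 i (by rw [Finset.mem_Icc]; omega)
  have hC'zero_lt : ∀ i, i < h' → C' i = 0 := fun i hi =>
    u5 i (by rw [Finset.mem_Icc]; omega)
  have hC'zero_gt : ∀ i, t' < i → C' i = 0 := fun i hi =>
    u5 i (by rw [Finset.mem_Icc]; omega)
  -- step C : psum p t' = k - 1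
  have hBt' : psum p t' = (k:ℤ) - 1 := by
    have e1 : psum p t' = ∑ i ∈ Finset.Icc 1 t', (H' i + C' i + T' i) := by
      rw [← sum_Icc_coeff]
      exact Finset.sum_congr rfl (fun i _ => u1 i)
    rw [Finset.sum_add_distrib, Finset.sum_add_distrib] at e1
    have eH : ∑ i ∈ Finset.Icc 1 t', H' i = (k:ℤ) - 1 := by
      have hss := Finset.sum_subset (Finset.Icc_subset_Icc_right hh't')
        (fun x _ hnx => u2 x hnx)
      rw [← hss]
      exact u4
    have eT : ∑ i ∈ Finset.Icc 1 t', T' i = 0 :=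
      Finset.sum_eq_zero (fun i hi => hT'zero i (by rw [Finset.mem_Icc] at hi; omega))
    have eC : ∑ i ∈ Finset.Icc 1 t', C' i = 0 := by
      rcases Nat.eq_zero_or_pos h' with h0 | h1
      · rw [h0] at u7
        have hz := sum_Icc_zero_left C' t'
        rw [hC'0, u7] at hz
        omega
      · have hss := Finset.sum_subset (Finset.Icc_subset_Icc_left h1)
          (fun x _ hnx => u5 x hnx)
        rw [← hss]
        exact u7
    rw [eH, eC, eT] at e1
    omega
  -- step D : beyond t' all partial sums are ≥ k
  have hD : ∀ j, t' < j → j ≤ n → (k:ℤ) ≤ psum p j := by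
    intro j hj hjn
    have hTcoeff : ∀ i, t' < i → i ≤ n → T' i = coeffFn p i := by
      intro i hi1 hi2
      have hu := u1 i
      rw [hH'zero i (by omega), hC'zero_gt i hi1] at hu
      omega
    have hhead : (segList T' (t'+1) n).getD 0 0 ≠ 0 := by
      rw [segList_getD T' (t'+1) n (show 0 < n + 1 - (t'+1) from by omega), Nat.add_zero,
        hTcoeff (t'+1) (by omega) (by omega)]
      exact coeff_ne hp (by omega) (by omega)
    have hps := psum_ge_one_of_adDeg u10 hhead (j - t') (by omega)
    rw [psum_segList T' t' n (j - t') (by omega) (by omega)] at hps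
    have hcong : ∑ i ∈ Finset.Icc (t'+1) (t' + (j - t')), T' i
        = ∑ i ∈ Finset.Icc (t'+1) (t' + (j - t')), coeffFn p i :=
      Finset.sum_congr rfl (fun i hi => by
        rw [Finset.mem_Icc] at hi
        exact hTcoeff i (by omega) (by omega))
    rw [hcong, show t' + (j - t') = j from by omega] at hps
    have hsp := sum_split (coeffFn p) (show t' ≤ j from by omega)
    rw [sum_Icc_coeff, sum_Icc_coeff] at hsp
    omega
  -- step E : t' = t
  have hEt : t' = t := by
    have h1 : t' ≤ t := htmax t' ((hTmem t').mpr ⟨ht'1, ht'n, hBt'⟩)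
    rcases eq_or_lt_of_le h1 with he | hlt
    · exact he
    · exfalso
      have := hD t hlt htn
      rw [htv] at this
      omega
  -- step F : h' = h
  have hEh : h' = h := by
    rcases Nat.eq_zero_or_pos h' with h0 | hpos
    · rw [h0] at u4
      rw [Finset.Icc_eq_empty (by omega), Finset.sum_empty] at u4
      have hk' : k = 1 := by omega
      rw [h0, hk1h hk']
    · have hle : h ≤ h' := by
        apply Nat.find_min' hHex
        have e1 : psum p h' = ∑ i ∈ Finset.Icc 1 h', (H' i + C' i + T' i) := by
          rw [← sum_Icc_coeff]
          exact Finset.sum_congr rfl (fun i _ => u1 i)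
        rw [Finset.sum_add_distrib, Finset.sum_add_distrib] at e1
        have eT : ∑ i ∈ Finset.Icc 1 h', T' i = 0 :=
          Finset.sum_eq_zero (fun i hi => hT'zero i (by rw [Finset.mem_Icc] at hi; omega))
        have eC : ∑ i ∈ Finset.Icc 1 h', C' i = C' h' := by
          apply Finset.sum_eq_single_of_mem h' (by rw [Finset.mem_Icc]; omega)
          intro b hb hbne
          rw [Finset.mem_Icc] at hb
          exact hC'zero_lt b (by omega)
        have hC'h' : 0 ≤ C' h' := by
          have := u6 h' (by rw [Finset.mem_Icc]; omega)
          rwa [Finset.Icc_self, Finset.sum_singleton] at this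
        rw [u4, eC, eT] at e1
        omega
      rcases eq_or_lt_of_le hle with he | hlt2
      · exact he.symm
      · exfalso
        have e1 : psum p h = ∑ i ∈ Finset.Icc 1 h, (H' i + C' i + T' i) := by
          rw [← sum_Icc_coeff]
          exact Finset.sum_congr rfl (fun i _ => u1 i)
        rw [Finset.sum_add_distrib, Finset.sum_add_distrib] at e1
        have eT : ∑ i ∈ Finset.Icc 1 h, T' i = 0 :=
          Finset.sum_eq_zero (fun i hi => hT'zero i (by rw [Finset.mem_Icc] at hi; omega))
        have eC : ∑ i ∈ Finset.Icc 1 h, C' i = 0 :=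
          Finset.sum_eq_zero (fun i hi => hC'zero_lt i (by rw [Finset.mem_Icc] at hi; omega))
        have eH : ∑ i ∈ Finset.Icc 1 h, H' i ≤ (k:ℤ) - 1 - H' h' := by
          have hsplit := sum_split H' (le_of_lt hlt2)
          have hsingle : H' h' ≤ ∑ i ∈ Finset.Icc (h+1) h', H' i := by
            apply Finset.single_le_sum (f := H') ?_ (by rw [Finset.mem_Icc]; omega)
            intro i hi
            rw [Finset.mem_Icc] at hi
            exact le_of_lt (u3 i (by rw [Finset.mem_Icc]; omega))
          rw [u4] at hsplit
          omega
        have hH'h' : 0 < H' h' := u3 h' (by rw [Finset.mem_Icc]; omega)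
        rw [eC, eT] at e1
        have := hh_spec
        omega
  subst hEt
  subst hEh
  -- step G : the functions coincide
  have eH' : H' = H := by
    funext i
    by_cases hmem : i ∈ Finset.Icc 1 h
    · rw [Finset.mem_Icc] at hmem
      by_cases hieq : i = h
      · have hh1 : 1 ≤ h := by omega
        have hprev : ∀ j, 1 ≤ j → j < h → H' j = coeffFn p j := by
          intro j hj1 hjh
          have hu := u1 j
          rw [hC'zero_lt j hjh, hT'zero j (by omega)] at hu
          omega
        have he : h - 1 + 1 = h := by omega
        rw [← he, Finset.sum_Icc_succ_top (by omega), he] at u4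
        have hcong2 : ∑ j ∈ Finset.Icc 1 (h-1), H' j = psum p (h-1) := by
          rw [← sum_Icc_coeff]
          exact Finset.sum_congr rfl (fun j hj => by
            rw [Finset.mem_Icc] at hj
            exact hprev j hj.1 (by omega))
        rw [hcong2] at u4
        have hHh : H h = (k:ℤ) - 1 - psum p (h-1) := by
          simp only [hHdef]
          simp [hh1]
          try omega
        rw [hieq, hHh]
        omega
      · have hih : i < h := by omega
        have hu := u1 i
        rw [hC'zero_lt i hih, hT'zero i (by omega)] at hu
        simp only [hHdef]
        rw [if_pos (show 1 ≤ i ∧ i ≤ h from ⟨hmem.1, hmem.2⟩), if_neg hieq]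
        omega
    · rw [u2 i hmem, hHsupp i hmem]
  have eC' : C' = C := by
    funext i
    by_cases hieq : i = h
    · have hCh : C h = psum p h - ((k:ℤ) - 1) := by
        simp only [hCdef]
        simp
      rcases Nat.eq_zero_or_pos h with h0 | hpos
      · rw [hieq, hCh, h0, hC'0, psum_zero, hh0k h0]
        norm_num
      · have hHh : H h = (k:ℤ) - 1 - psum p (h-1) := by
          simp only [hHdef]
          simp [hpos]
          try omega
        have hu := u1 h
        rw [hT'zero h (by omega), eH', hHh, coeff_psum p hpos] at hu
        rw [hieq, hCh]
        omega
    · by_cases hmem : i ∈ Finset.Icc h t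
      · rw [Finset.mem_Icc] at hmem
        have hhi : h < i := by omega
        have hu := u1 i
        rw [hH'zero i hhi, hT'zero i (by omega)] at hu
        simp only [hCdef]
        rw [if_neg hieq, if_pos (show h < i ∧ i ≤ t from ⟨hhi, hmem.2⟩)]
        omega
      · have hz := u5 i hmem
        rw [Finset.mem_Icc] at hmem
        rw [hz]
        simp only [hCdef]
        rw [if_neg hieq, if_neg (show ¬(h < i ∧ i ≤ t) from by omega)]
  have eT' : T' = T := by
    funext i
    by_cases hmem : i ∈ Finset.Icc (t+1) n
    · rw [Finset.mem_Icc] at hmem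
      have hu := u1 i
      rw [hH'zero i (by omega), hC'zero_gt i (by omega)] at hu
      simp only [hTdef]
      rw [if_pos (show t + 1 ≤ i ∧ i ≤ n from ⟨hmem.1, hmem.2⟩)]
      omega
    · have hz := u9 i hmem
      rw [Finset.mem_Icc] at hmem
      rw [hz]
      simp only [hTdef]
      rw [if_neg hmem]
  rw [Prod.mk.injEq, Prod.mk.injEq]
  exact ⟨eH', eC', eT'⟩
end

section
/- Let p be an admissible pattern of length n such that the sum of its coefficients is zero (bₙ = 0). A numerical semigroup S admits p if and only if the additive monoid generated by the integers b₁,…,bₙ is a subset of S. -/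
/-!
Because `bₙ = 0`, Abel summation rewrites `p(s₁,…,sₙ)` as `∑ᵢ bᵢ (sᵢ - sᵢ₊₁)`, a combination
of the `bᵢ` with coefficients in `ℕ` when `s` is nonincreasing; so `S` admits `p` once it contains
the monoid generated by the `bᵢ`. Conversely, for `N` beyond the Frobenius number of `S`,
evaluating `p` at `(N + 1, …, N + 1, N, …, N)` with `i` entries `N + 1` gives `bₙ N + bᵢ = bᵢ`.
-/

lemma psum_zero (p : List ℤ) : psum p 0 = 0 := by
  simp [psum]

lemma psum_succ (p : List ℤ) (i : ℕ) : psum p (i + 1) = psum p i + p.getD i 0 :=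
  Finset.sum_range_succ _ i

lemma psum_length (p : List ℤ) : psum p p.length = p.sum := by
  induction p with
  | nil => simp [psum]
  | cons a q ih =>
    simp only [psum, List.length_cons, Finset.sum_range_succ', List.getD_cons_succ,
      List.getD_cons_zero, List.sum_cons] at ih ⊢
    rw [ih, add_comm]

lemma patEval_eq_sum_psum_mul_sub {p : List ℤ} (hsum : p.sum = 0) (s : ℕ → ℕ) :
    patEval p s = ∑ i ∈ Finset.range p.length, psum p (i + 1) * ((s i : ℤ) - s (i + 1)) := by
  have hterm : ∀ i, p.getD i 0 * (s i : ℤ) =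
      psum p (i + 1) * ((s i : ℤ) - s (i + 1)) + (psum p (i + 1) * s (i + 1) - psum p i * s i) := by
    intro i
    rw [psum_succ]
    ring
  rw [patEval, Finset.sum_congr rfl fun i _ => hterm i, Finset.sum_add_distrib,
    Finset.sum_range_sub (fun i => psum p i * (s i : ℤ)), psum_length, hsum, psum_zero]
  simp

lemma patEval_mem_closure_psum {p : List ℤ} (hsum : p.sum = 0) {s : ℕ → ℕ} (hs : Antitone s) :
    patEval p s ∈ AddSubmonoid.closure
      {b : ℤ | ∃ i : ℕ, 1 ≤ i ∧ i ≤ p.length ∧ b = psum p i} := by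
  rw [patEval_eq_sum_psum_mul_sub hsum]
  refine AddSubmonoid.sum_mem _ fun i hi => ?_
  have hgen : psum p (i + 1) ∈ {b : ℤ | ∃ k : ℕ, 1 ≤ k ∧ k ≤ p.length ∧ b = psum p k} :=
    ⟨i + 1, by omega, Finset.mem_range.mp hi, rfl⟩
  have hcoeff : (s i : ℤ) - s (i + 1) = ((s i - s (i + 1) : ℕ) : ℤ) := by
    rw [Nat.cast_sub (hs (Nat.le_succ i))]
  rw [hcoeff, mul_comm, ← nsmul_eq_mul]
  exact nsmul_mem (AddSubmonoid.subset_closure hgen) _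

lemma patEval_add_indicator_lt (p : List ℤ) (N : ℕ) {i : ℕ} (hi : i ≤ p.length) :
    patEval p (fun j => N + if j < i then 1 else 0) = p.sum * N + psum p i := by
  have hind : ∀ j, p.getD j 0 * ((N + if j < i then 1 else 0 : ℕ) : ℤ) =
      p.getD j 0 * N + if j ∈ Finset.range i then p.getD j 0 else 0 := by
    intro j
    by_cases hj : j < i
    · simp only [hj, if_true, Finset.mem_range]
      push_cast
      ring
    · simp [hj]
  rw [patEval, Finset.sum_congr rfl fun j _ => hind j, Finset.sum_add_distrib, ← Finset.sum_mul,
    Finset.sum_ite_mem, Finset.inter_eq_right.mpr (Finset.range_subset_range.mpr hi), ← psum,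
    ← psum, psum_length]

namespace IsNumericalSemigroup

def toAddSubmonoid {S : Set ℕ} (hS : IsNumericalSemigroup S) : AddSubmonoid ℕ where
  carrier := S
  add_mem' ha hb := hS.2.1 _ ha _ hb
  zero_mem' := hS.1

lemma exists_forall_ge_mem {S : Set ℕ} (hS : IsNumericalSemigroup S) : ∃ N, ∀ n ≥ N, n ∈ S := by
  obtain ⟨M, hM⟩ := hS.2.2.bddAbove
  exact ⟨M + 1, fun n hn => by_contra fun hnS => absurd (hM hnS) (by omega)⟩

end IsNumericalSemigroup

lemma AddSubmonoid.forall_mem_closure_exists_natCast_eq_iff (S : AddSubmonoid ℕ) (G : Set ℤ) :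
    (∀ x ∈ AddSubmonoid.closure G, ∃ m ∈ S, (m : ℤ) = x) ↔ ∀ x ∈ G, ∃ m ∈ S, (m : ℤ) = x :=
  AddSubmonoid.closure_le (S := S.map (Nat.castAddMonoidHom ℤ))

theorem stmt_4_general (p : List ℤ)
    (hsum : p.sum = 0) (S : Set ℕ) (hS : IsNumericalSemigroup S) :
    AdmitsPat S p ↔
      ∀ x ∈ AddSubmonoid.closure
          {b : ℤ | ∃ i : ℕ, 1 ≤ i ∧ i ≤ p.length ∧ b = psum p i},
        ∃ m ∈ S, (m : ℤ) = x := by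
  constructor
  · intro hadmits
    apply (AddSubmonoid.forall_mem_closure_exists_natCast_eq_iff hS.toAddSubmonoid _).mpr
    rintro _ ⟨i, -, hi, rfl⟩
    obtain ⟨N, hN⟩ := hS.exists_forall_ge_mem
    obtain ⟨m, hmS, hm⟩ := hadmits (fun j => N + if j < i then 1 else 0)
      (fun j => hN _ (Nat.le_add_right _ _))
      (fun a b hab => by split_ifs <;> omega)
    exact ⟨m, hmS, by rw [hm, patEval_add_indicator_lt p N hi, hsum, zero_mul, zero_add]⟩
  · intro hclosure s _ hs
    exact hclosure _ (patEval_mem_closure_psum hsum hs)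

/-- Let p be an admissible pattern whose coefficients sum to zero. A numerical
semigroup S admits p iff the additive monoid generated by b₁,…,bₙ is
contained in S. -/
theorem stmt_4 (p : List ℤ) (hp : ∀ a ∈ p, a ≠ 0) (hadm : Admissible p)
    (hsum : p.sum = 0) (S : Set ℕ) (hS : IsNumericalSemigroup S) :
    AdmitsPat S p ↔
      ∀ x ∈ AddSubmonoid.closure
          {b : ℤ | ∃ i : ℕ, 1 ≤ i ∧ i ≤ p.length ∧ b = psum p i},
        ∃ m ∈ S, (m : ℤ) = x :=
  stmt_4_general p hsum S hS
end

section
/- Let p be a pattern of admissibility degree 1 with standard decomposition p = C_p + T_p (the head of p is zero). A numerical semigroup S admits p if and only if S admits both C_p and T_p. -/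

lemma patEval_congr (p : List ℤ) {s t : ℕ → ℕ} (h : ∀ i < p.length, s i = t i) :
    patEval p s = patEval p t :=
  Finset.sum_congr rfl fun i hi => by rw [h i (Finset.mem_range.mp hi)]

lemma sum_getD (C : List ℤ) : ∑ i ∈ Finset.range C.length, C.getD i 0 = C.sum := by
  induction C with
  | nil => simp
  | cons a l ih =>
    rw [List.length_cons, Finset.sum_range_succ']
    simp only [List.getD_cons_succ, List.getD_cons_zero, ih, List.sum_cons]
    ring

lemma patEval_append (C T : List ℤ) (s : ℕ → ℕ) :
    patEval (C ++ T) s = patEval C s + patEval T (fun j => s (C.length + j)) := by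
  unfold patEval
  rw [List.length_append, Finset.sum_range_add]
  congr 1
  · exact Finset.sum_congr rfl fun i hi => by
      rw [List.getD_append _ _ _ _ (Finset.mem_range.mp hi)]
  · exact Finset.sum_congr rfl fun i hi => by
      rw [List.getD_append_right _ _ _ _ (Nat.le_add_right _ _), Nat.add_sub_cancel_left]

/-- If p has admissibility degree 1, with standard decomposition p = C_p + T_p
(head zero, so p is the concatenation of the center and the tail), then a
numerical semigroup S admits p iff it admits both C_p and T_p. -/
theorem stmt_5 (C T p : List ℤ) (hpCT : p = C ++ T)
    (hp : ∀ a ∈ p, a ≠ 0) (hdeg : adDeg p = 1)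
    (hCadm : Admissible C) (hCsum : C.sum = 0) (hTdeg : 1 < adDeg T)
    (S : Set ℕ) (hS : IsNumericalSemigroup S) :
    AdmitsPat S p ↔ (AdmitsPat S C ∧ AdmitsPat S T) := by
  obtain ⟨h0, hadd, -⟩ := hS
  subst hpCT
  constructor
  · intro h
    constructor
    · intro s hsS hmono
      obtain ⟨m, hm, hme⟩ := h (fun i => if i < C.length then s i else 0)
        (fun i => by by_cases hi : i < C.length <;> simp [hi, hsS, h0])
        (fun i j hij => by
          by_cases hj : j < C.length
          · have hi : i < C.length := lt_of_le_of_lt hij hj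
            simpa [hi, hj] using hmono i j hij
          · simp [hj])
      refine ⟨m, hm, ?_⟩
      rw [hme, patEval_append]
      have h1 : patEval C (fun i => if i < C.length then s i else 0) = patEval C s :=
        patEval_congr C fun i hi => by simp [hi]
      have h2 : patEval T (fun j => if C.length + j < C.length then s (C.length + j) else 0) = 0 := by
        refine Finset.sum_eq_zero fun i _ => ?_
        have hh : ¬ (C.length + i < C.length) := by omega
        simp [hh]
      rw [h1, h2, add_zero]
    · intro t htS hmono
      obtain ⟨m, hm, hme⟩ := h (fun i => if i < C.length then t 0 else t (i - C.length))
        (fun i => by by_cases hi : i < C.length <;> simp [hi, htS])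
        (fun i j hij => by
          by_cases hj : j < C.length
          · have hi : i < C.length := lt_of_le_of_lt hij hj
            simp [hi, hj]
          · simp only [if_neg hj]
            by_cases hi : i < C.length
            · simp only [if_pos hi]
              exact hmono 0 (j - C.length) (Nat.zero_le _)
            · simp only [if_neg hi]
              exact hmono _ _ (by omega))
      refine ⟨m, hm, ?_⟩
      rw [hme, patEval_append]
      have h1 : patEval C (fun i => if i < C.length then t 0 else t (i - C.length)) = 0 := by
        have : patEval C (fun i => if i < C.length then t 0 else t (i - C.length))
            = patEval C (fun _ => t 0) :=
          patEval_congr C fun i hi => by simp [hi]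
        rw [this]
        unfold patEval
        rw [← Finset.sum_mul, sum_getD, hCsum, zero_mul]
      have h2 : patEval T (fun j => if C.length + j < C.length then t 0 else t (C.length + j - C.length)) = patEval T t :=
        patEval_congr T fun i _ => by
          have hh : ¬ (C.length + i < C.length) := by omega
          simp [hh]
      rw [h1, h2, zero_add]
  · rintro ⟨hC, hT⟩ s hsS hmono
    obtain ⟨m1, hm1, he1⟩ := hC s hsS hmono
    obtain ⟨m2, hm2, he2⟩ := hT (fun j => s (C.length + j)) (fun j => hsS _)
      (fun i j hij => hmono _ _ (by omega))
    refine ⟨m1 + m2, hadd _ hm1 _ hm2, ?_⟩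
    push_cast
    rw [he1, he2, patEval_append]
end

section
/- Let p be a pattern of admissibility degree 1 with standard decomposition p = C_p(x₁,…,x_t) + T_p(x_{t+1},…,xₙ). A numerical semigroup S admits p if and only if S admits T_p and S contains the additive monoid generated by b₁,…,b_t. -/
lemma sum_getD_eq_sum (l : List ℤ) :
    ∑ j ∈ Finset.range l.length, l.getD j 0 = l.sum := by
  induction l with
  | nil => simp
  | cons a l ih =>
    rw [List.length_cons, Finset.sum_range_succ']
    simp only [List.getD_cons_succ, List.getD_cons_zero, List.sum_cons, ih]
    ring

lemma abel_eval (p : List ℤ) (s : ℕ → ℕ) (t : ℕ) :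
    ∑ i ∈ Finset.range t, p.getD i 0 * (s i : ℤ)
    = (∑ k ∈ Finset.range t, psum p (k+1) * ((s k : ℤ) - (s (k+1) : ℤ)))
      + psum p t * (s t : ℤ) := by
  induction t with
  | zero => simp [psum]
  | succ t ih =>
    rw [Finset.sum_range_succ, ih, Finset.sum_range_succ]
    have h : psum p (t+1) = psum p t + p.getD t 0 := Finset.sum_range_succ _ _
    rw [h]; ring

lemma exists_conductor (S : Set ℕ) (hfin : Sᶜ.Finite) : ∃ N, ∀ n, N ≤ n → n ∈ S := by
  obtain ⟨N, hN⟩ := hfin.bddAbove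
  refine ⟨N+1, fun n hn => ?_⟩
  by_contra h
  exact absurd (hN h) (by omega)

/-- If p has admissibility degree 1, with standard decomposition
p = C_p(x₁,…,x_t) + T_p(x_{t+1},…,xₙ), then a numerical semigroup S admits p
iff S admits T_p and S contains the additive monoid generated by b₁,…,b_t. -/
theorem stmt_6 (C T p : List ℤ) (hpCT : p = C ++ T)
    (hp : ∀ a ∈ p, a ≠ 0) (hdeg : adDeg p = 1)
    (hCadm : Admissible C) (hCsum : C.sum = 0) (hTdeg : 1 < adDeg T)
    (S : Set ℕ) (hS : IsNumericalSemigroup S) :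
    AdmitsPat S p ↔
      (AdmitsPat S T ∧
        ∀ x ∈ AddSubmonoid.closure
            {b : ℤ | ∃ i : ℕ, 1 ≤ i ∧ i ≤ C.length ∧ b = psum p i},
          ∃ m ∈ S, (m : ℤ) = x) := by
  have hlen : p.length = C.length + T.length := by rw [hpCT, List.length_append]
  have hgetC : ∀ j, j < C.length → p.getD j 0 = C.getD j 0 := fun j hj => by
    rw [hpCT]; exact List.getD_append _ _ _ _ hj
  have hgetT : ∀ j, p.getD (C.length + j) 0 = T.getD j 0 := fun j => by
    rw [hpCT, List.getD_append_right _ _ _ _ (Nat.le_add_right _ j)]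
    congr 1
    omega
  have hpsumt : ∑ j ∈ Finset.range C.length, p.getD j 0 = 0 := by
    rw [Finset.sum_congr rfl (fun j hj => hgetC j (Finset.mem_range.mp hj)),
      sum_getD_eq_sum, hCsum]
  obtain ⟨N, hN⟩ := exists_conductor S hS.2.2
  have hsplit : ∀ s : ℕ → ℕ, patEval p s =
      (∑ k ∈ Finset.range C.length, psum p (k+1) * ((s k : ℤ) - (s (k+1) : ℤ)))
      + patEval T (fun j => s (C.length + j)) := by
    intro s
    unfold patEval
    rw [hlen, Finset.sum_range_add, abel_eval p s C.length]
    have h0 : psum p C.length = 0 := hpsumt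
    rw [h0, zero_mul, add_zero]
    congr 1
    exact Finset.sum_congr rfl (fun j _ => by rw [hgetT j])
  constructor
  · intro hA
    constructor
    · -- S admits T
      intro s hsS hsm
      set w := max N (s 0) with hw
      have hwS : w ∈ S := hN _ (le_max_left _ _)
      set s' : ℕ → ℕ := fun j => if j < C.length then w else s (j - C.length) with hs'
      have h1 : ∀ i, s' i ∈ S := by
        intro i
        by_cases h : i < C.length <;> simp [hs', h, hwS, hsS]
      have h2 : ∀ i j, i ≤ j → s' j ≤ s' i := by
        intro i j hij
        simp only [hs']
        by_cases hi : i < C.length <;> by_cases hj : j < C.length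
        · simp [hi, hj]
        · simp only [if_pos hi, if_neg hj]
          exact le_trans (hsm 0 _ (Nat.zero_le _)) (le_max_right _ _)
        · exact absurd hj (by omega)
        · simp only [if_neg hi, if_neg hj]
          exact hsm _ _ (by omega)
      obtain ⟨m, hm, hmeq⟩ := hA s' h1 h2
      refine ⟨m, hm, ?_⟩
      rw [hmeq]
      unfold patEval
      rw [hlen, Finset.sum_range_add]
      have e1 : ∑ i ∈ Finset.range C.length, p.getD i 0 * (s' i : ℤ) = 0 := by
        have hc : ∀ i ∈ Finset.range C.length,
            p.getD i 0 * (s' i : ℤ) = p.getD i 0 * (w : ℤ) := by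
          intro i hi
          simp [hs', Finset.mem_range.mp hi]
        rw [Finset.sum_congr rfl hc, ← Finset.sum_mul, hpsumt, zero_mul]
      have e2 : ∀ i ∈ Finset.range T.length,
          p.getD (C.length + i) 0 * (s' (C.length + i) : ℤ) = T.getD i 0 * (s i : ℤ) := by
        intro i hi
        rw [hgetT i]
        have hni : ¬ (C.length + i < C.length) := by omega
        simp [hs', hni]
      rw [e1, Finset.sum_congr rfl e2, zero_add]
    · -- closure part
      intro x hx
      refine AddSubmonoid.closure_induction (fun b hb => ?_) ⟨0, hS.1, by norm_num⟩
        (fun a b _ _ ha hb => ?_) hx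
      · obtain ⟨i, hi1, hit, rfl⟩ := hb
        set s : ℕ → ℕ := fun j => if j < i then N+1 else if j < C.length then N else 0
          with hsdef
        have h1 : ∀ j, s j ∈ S := by
          intro j
          simp only [hsdef]
          split
          · exact hN _ (by omega)
          · split
            · exact hN _ le_rfl
            · exact hS.1
        have h2 : ∀ a b, a ≤ b → s b ≤ s a := by
          intro a b hab
          simp only [hsdef]
          by_cases hbi : b < i
          · have hai : a < i := lt_of_le_of_lt hab hbi
            simp [hai, hbi]
          · by_cases hbc : b < C.length
            · have hac : a < C.length := by omega
              by_cases hai : a < i <;> simp [hai, hbi, hbc, hac] <;> omega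
            · simp [hbi, hbc]
        obtain ⟨m, hm, hmeq⟩ := hA s h1 h2
        refine ⟨m, hm, ?_⟩
        rw [hmeq]
        unfold patEval
        rw [hlen, Finset.sum_range_add]
        have e2 : ∑ j ∈ Finset.range T.length,
            p.getD (C.length + j) 0 * (s (C.length + j) : ℤ) = 0 := by
          apply Finset.sum_eq_zero
          intro j hj
          have ha : ¬ (C.length + j < i) := by omega
          have hb' : ¬ (C.length + j < C.length) := by omega
          simp [hsdef, ha, hb']
        have e1 : ∑ j ∈ Finset.range C.length, p.getD j 0 * (s j : ℤ)
            = ∑ j ∈ Finset.range C.length,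
                (p.getD j 0 * (N : ℤ) + (if j < i then p.getD j 0 else 0)) := by
          apply Finset.sum_congr rfl
          intro j hj
          by_cases hji : j < i
          · simp only [hsdef, if_pos hji]
            push_cast
            ring
          · simp only [hsdef, if_neg hji, if_pos (Finset.mem_range.mp hj)]
            ring
        have e3 : ∑ j ∈ Finset.range C.length, (if j < i then p.getD j 0 else 0)
            = psum p i := by
          rw [← Finset.sum_subset (Finset.range_subset_range.mpr hit)
              (fun j _ hj => if_neg (by simpa using hj))]
          exact Finset.sum_congr rfl (fun j hj => if_pos (Finset.mem_range.mp hj))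
        rw [e1, e2, add_zero, Finset.sum_add_distrib, ← Finset.sum_mul, hpsumt, zero_mul,
          zero_add, e3]
      · obtain ⟨ma, hma, hea⟩ := ha
        obtain ⟨mb, hmb, heb⟩ := hb
        exact ⟨ma + mb, hS.2.1 _ hma _ hmb, by push_cast; rw [hea, heb]⟩
  · rintro ⟨hT, hcl⟩ s hsS hsm
    obtain ⟨m2, hm2, he2⟩ := hT (fun j => s (C.length + j)) (fun j => hsS _)
      (fun a b hab => hsm _ _ (by omega))
    have hX : (∑ k ∈ Finset.range C.length, psum p (k+1) * ((s k : ℤ) - (s (k+1) : ℤ)))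
        ∈ AddSubmonoid.closure {b : ℤ | ∃ i : ℕ, 1 ≤ i ∧ i ≤ C.length ∧ b = psum p i} := by
      apply AddSubmonoid.sum_mem
      intro k hk
      have hmono : s (k+1) ≤ s k := hsm k (k+1) (by omega)
      have hrw : psum p (k+1) * ((s k : ℤ) - (s (k+1) : ℤ))
          = (s k - s (k+1)) • psum p (k+1) := by
        rw [nsmul_eq_mul, Nat.cast_sub hmono]
        ring
      rw [hrw]
      have hmem : psum p (k+1) ∈ {b : ℤ | ∃ i : ℕ, 1 ≤ i ∧ i ≤ C.length ∧ b = psum p i} :=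
        ⟨k+1, by omega, by have := Finset.mem_range.mp hk; omega, rfl⟩
      exact AddSubmonoid.nsmul_mem (AddSubmonoid.closure _) (AddSubmonoid.subset_closure hmem) _
    obtain ⟨m1, hm1, he1⟩ := hcl _ hX
    refine ⟨m1 + m2, hS.2.1 _ hm1 _ hm2, ?_⟩
    rw [hsplit s]
    push_cast
    rw [he1, he2]
end

section
/- A numerical semigroup S admits every pattern whose admissibility degree is greater than or equal to ⌈c(S)/m(S)⌉ + 1. -/
/-- The multiplicity m(S) = min(S ∖ {0}). -/
noncomputable def multS (S : Set ℕ) : ℕ := sInf (S \ {0})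

/-- The conductor c(S) = min{x ∈ ℕ : x + ℕ ⊆ S}. -/
noncomputable def condS (S : Set ℕ) : ℕ :=
  sInf {c : ℕ | ∀ x : ℕ, c ≤ x → x ∈ S}

lemma mul_mem_NS {S : Set ℕ} (hS : IsNumericalSemigroup S) {a : ℕ} (ha : a ∈ S) :
    ∀ n : ℕ, n * a ∈ S
  | 0 => by simpa using hS.1
  | n + 1 => by
      have h := hS.2.1 _ (mul_mem_NS hS ha n) _ ha
      simpa [Nat.succ_mul] using h

lemma patEval_cons (a : ℤ) (t : List ℤ) (s : ℕ → ℕ) :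
    patEval (a :: t) s = a * s 0 + patEval t (fun i => s (i + 1)) := by
  unfold patEval
  rw [List.length_cons, Finset.sum_range_succ']
  simp [add_comm]

lemma admissible_nonneg {p : List ℤ} (hp : Admissible p) (s : ℕ → ℕ)
    (hmono : ∀ i j, i ≤ j → s j ≤ s i) : 0 ≤ patEval p s := by
  obtain ⟨T, hT, hadm⟩ := hp
  have hinf : T.Infinite := by
    have := hT.2.2.infinite_compl
    simpa using this
  obtain ⟨M, hM⟩ := (hinf.diff (Set.finite_singleton 0)).nonempty
  have hMpos : 0 < M := Nat.pos_of_ne_zero hM.2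
  obtain ⟨r, hr, hre⟩ := hadm (fun i => s i * M)
    (fun i => mul_mem_NS hT hM.1 (s i))
    (fun i j hij => Nat.mul_le_mul_right _ (hmono i j hij))
  have hcast : patEval p (fun i => s i * M) = patEval p s * M := by
    unfold patEval
    rw [Finset.sum_mul]
    push_cast
    exact Finset.sum_congr rfl fun i _ => by ring
  have h0 : (0 : ℤ) * M ≤ patEval p s * M := by
    rw [zero_mul, ← hcast, ← hre]; exact Int.ofNat_nonneg r
  exact le_of_mul_le_mul_right h0 (by exact_mod_cast hMpos)

lemma key_step {S : Set ℕ} (hS : IsNumericalSemigroup S) (m : ℕ)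
    (hm : ∀ x ∈ S, x ≠ 0 → m ≤ x) :
    ∀ (k : ℕ) (p : List ℤ), (∀ j ≤ k, Admissible (pderiv^[j] p)) →
    ∀ s : ℕ → ℕ, (∀ i, s i ∈ S) → (∀ i j, i ≤ j → s j ≤ s i) →
    (∃ r ∈ S, (r : ℤ) = patEval p s) ∨ ((k * m : ℕ) : ℤ) ≤ patEval p s := by
  intro k
  induction k with
  | zero =>
      intro p hadm s hsS hmono
      exact Or.inr (by simpa using admissible_nonneg (hadm 0 le_rfl) s hmono)
  | succ k ih =>
      intro p hadm s hsS hmono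
      match p with
      | [] => exact Or.inl ⟨0, hS.1, by simp [patEval]⟩
      | a :: t =>
        by_cases h0 : s 0 = 0
        · refine Or.inl ⟨0, hS.1, ?_⟩
          have hz : ∀ i, (s i : ℤ) = 0 := fun i => by
            have := hmono 0 i (Nat.zero_le i)
            omega
          unfold patEval
          rw [eq_comm]
          exact Finset.sum_eq_zero fun i _ => by rw [hz i, mul_zero]
        · set s₁ : ℕ → ℕ := if a = 1 then (fun i => s (i + 1)) else s with hs₁
          have hstep : patEval (a :: t) s = (s 0 : ℤ) + patEval (pderiv (a :: t)) s₁ := by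
            by_cases ha : a = 1
            · simp [pderiv, ha, hs₁, patEval_cons]
            · simp only [pderiv, if_neg ha, hs₁]
              rw [patEval_cons, patEval_cons]
              ring
          have hs₁S : ∀ i, s₁ i ∈ S := by
            intro i; by_cases ha : a = 1 <;> simp [hs₁, ha, hsS]
          have hs₁mono : ∀ i j, i ≤ j → s₁ j ≤ s₁ i := by
            intro i j hij
            by_cases ha : a = 1 <;> simp [hs₁, ha]
            · exact hmono _ _ (by omega)
            · exact hmono _ _ hij
          have IH := ih (pderiv (a :: t))
            (fun j hj => by
              have h := hadm (j + 1) (by omega)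
              rwa [Function.iterate_succ_apply] at h)
            s₁ hs₁S hs₁mono
          rcases IH with ⟨r, hrS, hre⟩ | hge
          · refine Or.inl ⟨r + s 0, hS.2.1 r hrS (s 0) (hsS 0), ?_⟩
            rw [hstep, ← hre]; push_cast; ring
          · right
            have hm0 : m ≤ s 0 := hm (s 0) (hsS 0) h0
            rw [hstep]
            push_cast at hge ⊢
            nlinarith [hge, hm0]

/-- A numerical semigroup S admits every pattern of admissibility degree at
least ⌈c(S)/m(S)⌉ + 1. -/
theorem stmt_8 (S : Set ℕ) (hS : IsNumericalSemigroup S)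
    (p : List ℤ) (hp : ∀ a ∈ p, a ≠ 0)
    (hdeg : ((condS S ⌈/⌉ multS S + 1 : ℕ) : ℕ∞) ≤ adDeg p) :
    AdmitsPat S p := by
  intro s hsS hmono
  set m := multS S with hmdef
  set c := condS S with hcdef
  have hSdiff : (S \ {0}).Nonempty := by
    have hinf : S.Infinite := by
      have := hS.2.2.infinite_compl
      simpa using this
    exact (hinf.diff (Set.finite_singleton 0)).nonempty
  have hmmem : m ∈ S \ {0} := Nat.sInf_mem hSdiff
  have hmpos : 0 < m := Nat.pos_of_ne_zero hmmem.2
  have hmle : ∀ x ∈ S, x ≠ 0 → m ≤ x := fun x hx hx0 => Nat.sInf_le ⟨hx, hx0⟩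
  have hcond : ∀ x, c ≤ x → x ∈ S := by
    have hne : {c : ℕ | ∀ x : ℕ, c ≤ x → x ∈ S}.Nonempty := by
      obtain ⟨N, hN⟩ := hS.2.2.bddAbove
      refine ⟨N + 1, fun x hx => ?_⟩
      by_contra hxS
      have := hN hxS
      omega
    exact Nat.sInf_mem hne
  set q := c ⌈/⌉ m with hqdef
  have hadm : ∀ j ≤ q, Admissible (pderiv^[j] p) := by
    intro j hj
    by_contra hna
    have h1 : adDeg p ≤ (j : ℕ∞) := sInf_le ⟨j, hna, rfl⟩
    have h2 := le_trans hdeg h1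
    rw [Nat.cast_le] at h2
    omega
  rcases key_step hS m hmle q p hadm s hsS hmono with ⟨r, hrS, hre⟩ | hge
  · exact ⟨r, hrS, hre⟩
  · have hc : c ≤ q * m := by
      have := le_smul_ceilDiv (b := c) hmpos
      simpa [hqdef, mul_comm, smul_eq_mul] using this
    have hnn : (0 : ℤ) ≤ patEval p s := le_trans (by positivity) hge
    obtain ⟨n, hn⟩ := Int.eq_ofNat_of_zero_le hnn
    refine ⟨n, hcond n ?_, hn.symm⟩
    have : ((q * m : ℕ) : ℤ) ≤ (n : ℤ) := hn ▸ hge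
    have h2 : q * m ≤ n := by exact_mod_cast this
    omega
end

section
/- For every n ∈ ℕ, the Arf pattern x₁+x₂−x₃ induces the pattern x₁ + n(x₂−x₃); that is, every numerical semigroup S admitting the Arf pattern also admits x₁ + nx₂ − nx₃. -/
/-- The Arf pattern x₁ + x₂ − x₃ induces x₁ + n·x₂ − n·x₃ for every n ∈ ℕ. -/
theorem stmt_11 (n : ℕ) (S : Set ℕ) (hS : IsNumericalSemigroup S)
    (hArf : AdmitsPat S [1, 1, -1]) :
    AdmitsPat S [1, (n : ℤ), -(n : ℤ)] := by
  intro s hmem hdec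
  have key : ∀ k : ℕ, ∃ m ∈ S, s 0 ≤ m ∧ (m : ℤ) = s 0 + k * s 1 - k * s 2 := by
    intro k
    induction k with
    | zero => exact ⟨s 0, hmem 0, le_refl _, by push_cast; ring⟩
    | succ k ih =>
      obtain ⟨m, hmS, hm0, hmeq⟩ := ih
      -- apply Arf to (m, s 1, s 2)
      set t : ℕ → ℕ := fun i => if i = 0 then m else if i = 1 then s 1 else s 2 with ht
      have htmem : ∀ i, t i ∈ S := by
        intro i
        simp only [ht]
        split
        · exact hmS
        · split
          · exact hmem 1
          · exact hmem 2
      have htdec : ∀ i j, i ≤ j → t j ≤ t i := by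
        intro i j hij
        rcases Nat.eq_zero_or_pos i with hi | hi
        · subst hi
          simp only [ht]
          split
          · exact le_refl _
          · split
            · exact le_trans (hdec 0 1 (by norm_num)) hm0
            · exact le_trans (hdec 0 2 (by norm_num)) hm0
        · have hj : j ≠ 0 := by omega
          have hi' : i ≠ 0 := by omega
          simp only [ht, if_neg hi', if_neg hj]
          rcases eq_or_ne i 1 with h1 | h1
          · subst h1
            split
            · exact le_refl _
            · exact hdec 1 2 (by norm_num)
          · simp only [if_neg h1]
            have hj1 : j ≠ 1 := by omega
            simp [if_neg hj1]
      obtain ⟨m', hm'S, hm'eq⟩ := hArf t htmem htdec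
      refine ⟨m', hm'S, ?_, ?_⟩
      · have hval : (m' : ℤ) = m + s 1 - s 2 := by
          rw [hm'eq]
          simp [patEval, Finset.sum_range_succ, ht]
          ring
        have h12 : (s 2 : ℤ) ≤ s 1 := by exact_mod_cast hdec 1 2 (by norm_num)
        have : (s 0 : ℤ) ≤ m' := by
          rw [hval]
          have : (s 0 : ℤ) ≤ m := by exact_mod_cast hm0
          linarith
        exact_mod_cast this
      · have hval : (m' : ℤ) = m + s 1 - s 2 := by
          rw [hm'eq]
          simp [patEval, Finset.sum_range_succ, ht]
          ring
        rw [hval, hmeq]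
        push_cast
        ring
  obtain ⟨m, hmS, _, hmeq⟩ := key n
  refine ⟨m, hmS, ?_⟩
  rw [hmeq]
  simp [patEval, Finset.sum_range_succ]
  ring
end

section
/- Let S be a numerical semigroup, p a pattern, and k ≥ 1 an integer. If S admits p, then the quotient S/k = {x ∈ ℕ : kx ∈ S} (which is a numerical semigroup) also admits p. -/
/-- If S admits p, then the quotient S/k = {x ∈ ℕ : kx ∈ S} also admits p. -/
theorem stmt_14 (S : Set ℕ) (hS : IsNumericalSemigroup S)
    (p : List ℤ) (hp : ∀ a ∈ p, a ≠ 0)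
    (k : ℕ) (hk : 1 ≤ k) (h : AdmitsPat S p) :
    AdmitsPat {x : ℕ | k * x ∈ S} p := by
  intro s hs hmono
  obtain ⟨m, hmS, hm⟩ := h (fun i => k * s i) (fun i => hs i)
    (fun i j hij => Nat.mul_le_mul_left k (hmono i j hij))
  have key : (m : ℤ) = k * patEval p s := by
    rw [hm, patEval, patEval, Finset.mul_sum]
    congr 1; ext i; push_cast; ring
  have hnn : 0 ≤ patEval p s := by
    nlinarith [Int.ofNat_nonneg m, (by exact_mod_cast hk : (1:ℤ) ≤ k), key]
  obtain ⟨t, ht⟩ := Int.eq_ofNat_of_zero_le hnn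
  refine ⟨t, ?_, ht.symm⟩
  have : m = k * t := by
    have : (m : ℤ) = (k * t : ℕ) := by rw [key, ht]; push_cast; ring
    exact_mod_cast this
  simpa [this] using hmS
end

section
/- Let S be a numerical semigroup, E a semigroup ideal of S, d ∈ S an odd integer, and p a pattern. If the numerical duplication S ⋈ᵈ E admits p, then S admits p. -/
/-- The numerical duplication S ⋈ᵈ E = 2·S ∪ (2·E + d). -/
def numDup (S E : Set ℕ) (d : ℕ) : Set ℕ :=
  {x | ∃ s ∈ S, x = 2 * s} ∪ {x | ∃ e ∈ E, x = 2 * e + d}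

/-- If the numerical duplication S ⋈ᵈ E admits p, then S admits p. -/
theorem stmt_15 (S E : Set ℕ) (hS : IsNumericalSemigroup S)
    (hES : E ⊆ S) (hE : ∀ e ∈ E, ∀ s ∈ S, e + s ∈ E)
    (d : ℕ) (hdS : d ∈ S) (hodd : Odd d)
    (p : List ℤ) (hp : ∀ a ∈ p, a ≠ 0)
    (h : AdmitsPat (numDup S E d) p) :
    AdmitsPat S p := by
  intro s hs hmono
  obtain ⟨m, hm, hmeq⟩ := h (fun i => 2 * s i)
    (fun i => Or.inl ⟨s i, hs i, rfl⟩)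
    (fun i j hij => Nat.mul_le_mul_left 2 (hmono i j hij))
  have heval : patEval p (fun i => 2 * s i) = 2 * patEval p s := by
    simp only [patEval, Finset.mul_sum]
    apply Finset.sum_congr rfl
    intro i _
    push_cast
    ring
  rw [heval] at hmeq
  rcases hm with ⟨t, ht, htm⟩ | ⟨e, he, hem⟩
  · refine ⟨t, ht, ?_⟩
    have : (2 : ℤ) * t = 2 * patEval p s := by
      rw [← hmeq, htm]; push_cast; ring
    linarith
  · exfalso
    have hev : Even (m : ℤ) := ⟨patEval p s, by linarith⟩
    have hev' : Even m := by exact_mod_cast hev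
    obtain ⟨k, hk⟩ := hodd
    obtain ⟨r, hr⟩ := hev'
    omega
end

section
/- Let S be a numerical semigroup admitting a pattern p = a₁x₁+⋯+aₙxₙ of admissibility degree 2, let E be a semigroup ideal of S, and set B = {i : bᵢ = 1}, r = min B, t = max B (B is nonempty). If S ⋈ᵈ E admits p eventually with respect to d, then: (1) for every 1 ≤ i ≤ t, ⌊bᵢ/2⌋ ∈ E−E; and (2) for every r ≤ i ≤ t such that bᵢ is even, bᵢ/2 ≥ c(E) − min(E). -/
/-- S ⋈ᵈ E admits p eventually with respect to d. -/
def EventuallyAdmits (S E : Set ℕ) (p : List ℤ) : Prop :=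
  ∃ d' : ℕ, ∀ d : ℕ, d ∈ S → Odd d → d' ≤ d → AdmitsPat (numDup S E d) p

/-- The relative ideal E − E = {z ∈ ℤ : z + E ⊆ E}. -/
def EmE (E : Set ℕ) : Set ℤ :=
  {z : ℤ | ∀ e ∈ E, ∃ f ∈ E, (f : ℤ) = z + (e : ℤ)}

/-- The conductor c(E) = min{x ∈ ℕ : x + ℕ ⊆ E}. -/
noncomputable def condOf (E : Set ℕ) : ℕ :=
  sInf {c : ℕ | ∀ x : ℕ, c ≤ x → x ∈ E}

def prefixConst (n a : ℕ) : ℕ → ℕ := fun k => if k < n then a else 0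

theorem prefixConst_antitone (n a : ℕ) : Antitone (prefixConst n a) := by
  intro k l hkl
  unfold prefixConst
  split_ifs <;> omega

theorem patEval_add (p : List ℤ) (s s' : ℕ → ℕ) :
    patEval p (s + s') = patEval p s + patEval p s' := by
  simp only [patEval, Pi.add_apply, Nat.cast_add, mul_add, Finset.sum_add_distrib]

theorem patEval_prefixConst {p : List ℤ} {n : ℕ} (hn : n ≤ p.length) (a : ℕ) :
    patEval p (prefixConst n a) = psum p n * a := by
  rw [patEval, psum, Finset.sum_mul, ← Finset.sum_range_add_sum_Ico _ hn]
  have htail : ∑ k ∈ Finset.Ico n p.length, p.getD k 0 * (prefixConst n a k : ℤ) = 0 :=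
    Finset.sum_eq_zero fun k hk => by simp [prefixConst, (Finset.mem_Ico.1 hk).1]
  rw [htail, add_zero]
  exact Finset.sum_congr rfl fun k hk => by simp [prefixConst, Finset.mem_range.1 hk]

section NumDup

variable {S E : Set ℕ} {d : ℕ}

theorem two_mul_mem_numDup {s : ℕ} (hs : s ∈ S) : 2 * s ∈ numDup S E d :=
  Or.inl ⟨s, hs, rfl⟩

theorem two_mul_add_mem_numDup {e : ℕ} (he : e ∈ E) : 2 * e + d ∈ numDup S E d :=
  Or.inr ⟨e, he, rfl⟩

theorem exists_two_mul_add_eq_of_odd_mem_numDup {m : ℕ} (hm : m ∈ numDup S E d)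
    (hodd : Odd m) : ∃ e ∈ E, 2 * e + d = m := by
  rcases hm with ⟨s, -, rfl⟩ | ⟨e, he, rfl⟩
  · exact absurd hodd (by simp)
  · exact ⟨e, he, rfl⟩

/-- The test sequence is `x + 1 + y` on `[0, r)`, `x + 1` on `[r, i)`, `x` on `[i, t)` and `0` from
`t` on; an odd value of `p` on it must lie in `2·E + d`. -/
theorem exists_mem_eq_patEval_steps {p : List ℤ} (hadm : AdmitsPat (numDup S E d) p)
    (h0 : 0 ∈ S) {r i t : ℕ} (hri : r ≤ i) (hit : i ≤ t) (htl : t ≤ p.length)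
    {x y : ℕ} (hx : x ∈ numDup S E d) (hx1 : x + 1 ∈ numDup S E d)
    (hxy : x + 1 + y ∈ numDup S E d) (hodd : Odd (psum p t * x + psum p i + psum p r * y)) :
    ∃ f ∈ E, 2 * (f : ℤ) + d = psum p t * x + psum p i + psum p r * y := by
  set s := prefixConst t x + prefixConst i 1 + prefixConst r y
  have hval : patEval p s = psum p t * x + psum p i + psum p r * y := by
    simp only [s, patEval_add, patEval_prefixConst htl, patEval_prefixConst (hit.trans htl),
      patEval_prefixConst ((hri.trans hit).trans htl)]
    push_cast
    ring
  have hmem : ∀ k, s k ∈ numDup S E d := by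
    have h0' : 0 ∈ numDup S E d := two_mul_mem_numDup h0
    intro k
    simp only [s, Pi.add_apply, prefixConst]
    split_ifs <;> omega
  have hanti : Antitone s :=
    ((prefixConst_antitone t x).add (prefixConst_antitone i 1)).add (prefixConst_antitone r y)
  obtain ⟨m, hm, hms⟩ := hadm s hmem hanti
  rw [hval] at hms
  obtain ⟨f, hf, rfl⟩ := exists_two_mul_add_eq_of_odd_mem_numDup hm (by
    rw [← Int.odd_coe_nat, hms]; exact hodd)
  exact ⟨f, hf, by rw [← hms]; push_cast; ring⟩

end NumDup

theorem exists_forall_ge_mem_of_compl_finite {S : Set ℕ} (hS : Sᶜ.Finite) :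
    ∃ N, ∀ n, N ≤ n → n ∈ S := by
  obtain ⟨N, hN⟩ := hS.bddAbove
  exact ⟨N + 1, fun n hn => by_contra fun hnS => absurd (hN hnS) (by omega)⟩

theorem EventuallyAdmits.exists_admitsPat {S E : Set ℕ} {p : List ℤ}
    (hev : EventuallyAdmits S E p) (hS : Sᶜ.Finite) :
    ∃ D, (∀ n, D ≤ n → n ∈ S) ∧ AdmitsPat (numDup S E (2 * D + 1)) p := by
  obtain ⟨N, hN⟩ := exists_forall_ge_mem_of_compl_finite hS
  obtain ⟨d', hd'⟩ := hev
  refine ⟨N + d', fun n hn => hN n (by omega), hd' _ (hN _ (by omega)) ?_ (by omega)⟩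
  exact odd_two_mul_add_one _

theorem condOf_le_of_forall_exists_eq_add {E : Set ℕ} {a : ℤ}
    (h : ∀ k : ℕ, ∃ f ∈ E, (f : ℤ) = a + k) : (condOf E : ℤ) ≤ a := by
  obtain ⟨f₀, -, hf₀⟩ := h 0
  lift a to ℕ using by omega
  refine Nat.cast_le.2 (Nat.sInf_le fun x hx => ?_)
  obtain ⟨f, hf, hfx⟩ := h (x - a)
  rwa [show f = x by omega] at hf

section LargeDuplication

variable {S E : Set ℕ} {p : List ℤ} {D : ℕ} (hD : ∀ n, D ≤ n → n ∈ S) (h0 : 0 ∈ S)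
  (hadm : AdmitsPat (numDup S E (2 * D + 1)) p)
include hD h0 hadm

theorem fdiv_two_psum_mem_EmE {i t : ℕ} (hit : i ≤ t) (htl : t ≤ p.length)
    (ht : psum p t = 1) : (psum p i).fdiv 2 ∈ EmE E := by
  intro e he
  obtain ⟨q, hq⟩ := Int.even_or_odd' (psum p i)
  have hfdiv : (psum p i).fdiv 2 = q := by
    rw [Int.fdiv_eq_ediv_of_nonneg _ zero_le_two]
    omega
  suffices ∃ x : ℕ, x ∈ numDup S E (2 * D + 1) ∧ x + 1 ∈ numDup S E (2 * D + 1) ∧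
      (x : ℤ) + psum p i = 2 * (e + q) + (2 * D + 1 : ℕ) by
    obtain ⟨x, hx, hx1, hxval⟩ := this
    obtain ⟨f, hf, hfe⟩ := exists_mem_eq_patEval_steps hadm h0 le_rfl hit htl (y := 0) hx hx1 hx1
      (by
        simp only [ht, one_mul, Nat.cast_zero, mul_zero, add_zero, hxval]
        exact ⟨e + q + D, by push_cast; ring⟩)
    refine ⟨f, hf, ?_⟩
    simp only [ht, one_mul, Nat.cast_zero, mul_zero, add_zero, hxval] at hfe
    rw [hfdiv]
    linarith
  have hodd : 2 * e + (2 * D + 1) ∈ numDup S E (2 * D + 1) := two_mul_add_mem_numDup he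
  rcases hq with hq | hq
  · have hlarge : 2 * (e + D + 1) ∈ numDup S E (2 * D + 1) := two_mul_mem_numDup (hD _ (by omega))
    exact ⟨_, hodd, by convert hlarge using 1; ring, by rw [hq]; push_cast; ring⟩
  · have hlarge : 2 * (e + D) ∈ numDup S E (2 * D + 1) := two_mul_mem_numDup (hD _ (by omega))
    exact ⟨_, hlarge, by convert hodd using 1; ring, by rw [hq]; push_cast; ring⟩

theorem condOf_sub_sInf_le (hEne : E.Nonempty) {r i t : ℕ} (hri : r ≤ i) (hit : i ≤ t)
    (htl : t ≤ p.length) (hr : psum p r = 1) (ht : psum p t = 1) (heven : Even (psum p i)) :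
    (condOf E : ℤ) - ((sInf E : ℕ) : ℤ) ≤ psum p i / 2 := by
  obtain ⟨q, hq⟩ := heven
  set ε := sInf E
  have hε : ε ∈ E := Nat.sInf_mem hEne
  suffices (condOf E : ℤ) ≤ ε + q by omega
  refine condOf_le_of_forall_exists_eq_add fun k => ?_
  obtain ⟨f, hf, hfe⟩ := exists_mem_eq_patEval_steps hadm h0 hri hit htl
    (x := 2 * (ε + D)) (y := 2 * k + 1) (two_mul_mem_numDup (hD _ (by omega)))
    (by convert two_mul_add_mem_numDup hε using 1; ring)
    (by convert two_mul_mem_numDup (hD (ε + D + k + 1) (by omega)) using 1; ring)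
    (by rw [ht, hr, hq]; exact ⟨ε + q + D + k, by push_cast; ring⟩)
  refine ⟨f, hf, ?_⟩
  rw [ht, hr, hq] at hfe
  push_cast at hfe
  linarith

end LargeDuplication

theorem stmt_16_general (S E : Set ℕ) (hS : IsNumericalSemigroup S) (hEne : E.Nonempty) (p : List ℤ)
    (B : Set ℕ) (hB : B = {i : ℕ | 1 ≤ i ∧ i ≤ p.length ∧ psum p i = 1})
    (hBne : B.Nonempty) (r t : ℕ) (hr : r = sInf B) (ht : t = sSup B)
    (hev : EventuallyAdmits S E p) :
    (∀ i : ℕ, 1 ≤ i → i ≤ t → (psum p i).fdiv 2 ∈ EmE E) ∧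
    (∀ i : ℕ, r ≤ i → i ≤ t → Even (psum p i) →
      (condOf E : ℤ) - ((sInf E : ℕ) : ℤ) ≤ psum p i / 2) := by
  obtain ⟨h0, -, hfin⟩ := hS
  obtain ⟨D, hD, hadm⟩ := hev.exists_admitsPat hfin
  have hBbdd : BddAbove B := ⟨p.length, fun j hj => (hB ▸ hj).2.1⟩
  obtain ⟨-, -, hr1⟩ : r ∈ {i : ℕ | 1 ≤ i ∧ i ≤ p.length ∧ psum p i = 1} :=
    hB ▸ hr ▸ Nat.sInf_mem hBne
  obtain ⟨-, htl, ht1⟩ : t ∈ {i : ℕ | 1 ≤ i ∧ i ≤ p.length ∧ psum p i = 1} :=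
    hB ▸ ht ▸ Nat.sSup_mem hBne hBbdd
  exact ⟨fun i _ hit => fdiv_two_psum_mem_EmE hD h0 hadm hit htl ht1,
    fun i hri hit heven => condOf_sub_sInf_le hD h0 hadm hEne hri hit htl hr1 ht1 heven⟩

/-- Suppose S admits p, ad(p) = 2, and set B = {i : bᵢ = 1}, r = min B,
t = max B. If S ⋈ᵈ E admits p eventually with respect to d, then
(1) ⌊bᵢ/2⌋ ∈ E − E for all 1 ≤ i ≤ t, and (2) for all r ≤ i ≤ t with bᵢ even,
bᵢ/2 ≥ c(E) − min(E). -/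
theorem stmt_16 (S E : Set ℕ) (hS : IsNumericalSemigroup S)
    (hES : E ⊆ S) (hE : ∀ e ∈ E, ∀ s ∈ S, e + s ∈ E) (hEne : E.Nonempty)
    (p : List ℤ) (hp : ∀ a ∈ p, a ≠ 0)
    (hSp : AdmitsPat S p) (hdeg : adDeg p = 2)
    (B : Set ℕ) (hB : B = {i : ℕ | 1 ≤ i ∧ i ≤ p.length ∧ psum p i = 1})
    (hBne : B.Nonempty) (r t : ℕ) (hr : r = sInf B) (ht : t = sSup B)
    (hev : EventuallyAdmits S E p) :
    (∀ i : ℕ, 1 ≤ i → i ≤ t → (psum p i).fdiv 2 ∈ EmE E) ∧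
    (∀ i : ℕ, r ≤ i → i ≤ t → Even (psum p i) →
      (condOf E : ℤ) - ((sInf E : ℕ) : ℤ) ≤ psum p i / 2) :=
  stmt_16_general S E hS hEne p B hB hBne r t hr ht hev
end
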